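/- arXiv:1907.13011 — 6 statements merged into one kernel-verified Lean document; each statement's English description precedes it below -/
import Mathlib

section
/- Let T ⊆ ℝⁿ be a simplex (convex hull of n+1 affinely independent points), r ∈ (0,1), and x ∈ ℝⁿ. If (rT + x) ∩ T is nonempty then there exists y ∈ ℝⁿ such that (rT + x) ∩ T ⊆ rT + y ⊆ T. -/
/-! In barycentric coordinates `λᵢ` of the simplex `T`, every translate `rT + b` is a set
`{w | ∀ i, aᵢ ≤ λᵢ w}` with `∑ aᵢ = 1 - r`, and every such vector `a` arises from some `b`.
The intersection `(rT + c) ∩ T` is contained in `{w | ∀ i, max 0 aᵢ ≤ λᵢ w}`, and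
`∑ max 0 aᵢ ≥ 1 - r`; scaling the vector `max 0 aᵢ` down to total `1 - r` gives the bounds of
a translate `rT + y` squeezed between the intersection and `T = {w | ∀ i, 0 ≤ λᵢ w}`. -/

open Set
open scoped Pointwise

theorem AffineMap.apply_smul_add {k V₁ V₂ : Type*} [Ring k] [AddCommGroup V₁] [Module k V₁]
    [AddCommGroup V₂] [Module k V₂] (f : V₁ →ᵃ[k] V₂) (r : k) (u b : V₁) :
    f (r • u + b) = r • (f u - f 0) + f b := by
  rw [f.decomp]
  simp only [Pi.add_apply, map_add, map_smul, map_zero, zero_add, add_sub_cancel_right]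
  abel

theorem Set.mem_add_singleton_iff {G : Type*} [AddGroup G] {s : Set G} {b w : G} :
    w ∈ s + {b} ↔ w - b ∈ s := by
  simp [Set.add_singleton, sub_eq_add_neg]

theorem Finset.exists_le_sum_eq {ι : Type*} (s : Finset ι) {m : ι → ℝ} (hm : ∀ i, 0 ≤ m i)
    {σ : ℝ} (hσ : 0 ≤ σ) (hσm : σ ≤ ∑ i ∈ s, m i) :
    ∃ t : ι → ℝ, (∀ i, 0 ≤ t i ∧ t i ≤ m i) ∧ ∑ i ∈ s, t i = σ := by
  have hS : 0 ≤ ∑ i ∈ s, m i := Finset.sum_nonneg fun i _ => hm i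
  refine ⟨fun i => σ / (∑ j ∈ s, m j) * m i, fun i => ⟨by have := hm i; positivity, ?_⟩, ?_⟩
  · exact mul_le_of_le_one_left (hm i) (div_le_one_of_le₀ hσm hS)
  · rw [← Finset.mul_sum]
    rcases hS.eq_or_lt with h | h
    · rw [← h, div_zero, zero_mul]
      exact (le_antisymm (h ▸ hσm) hσ).symm
    · field_simp

namespace AffineBasis

variable {ι V : Type*} [AddCommGroup V] [Module ℝ V] (B : AffineBasis ι ℝ V)

theorem smul_convexHull_add_singleton_eq {r : ℝ} (hr : 0 < r) (b : V) :
    r • convexHull ℝ (range B) + {b} =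
      {w | ∀ i, B.coord i b - r * B.coord i 0 ≤ B.coord i w} := by
  ext w
  obtain ⟨u, rfl⟩ : ∃ u, w = r • u + b := ⟨r⁻¹ • (w - b), by simp [smul_smul, hr.ne']⟩
  rw [mem_add_singleton_iff, add_sub_cancel_right, smul_mem_smul_set_iff₀ hr.ne',
    B.convexHull_eq_nonneg_coord]
  refine forall_congr' fun i => ?_
  rw [(B.coord i).apply_smul_add, smul_eq_mul]
  constructor <;> intro h <;> nlinarith

theorem exists_coord_eq [Fintype ι] (w : ι → ℝ) (hw : ∑ i, w i = 1) :
    ∃ y, ∀ i, B.coord i y = w i :=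
  ⟨Finset.univ.affineCombination ℝ B w,
    fun i => B.coord_apply_combination_of_mem (Finset.mem_univ i) hw⟩

theorem exists_inter_subset_smul_convexHull_add_singleton_subset [Fintype ι] {r : ℝ}
    (hr₀ : 0 < r) (hr₁ : r ≤ 1) (c : V) :
    ∃ y, (r • convexHull ℝ (range B) + {c}) ∩ convexHull ℝ (range B) ⊆
        r • convexHull ℝ (range B) + {y} ∧
      r • convexHull ℝ (range B) + {y} ⊆ convexHull ℝ (range B) := by
  set m := fun i => max 0 (B.coord i c - r * B.coord i 0)
  have hσm : 1 - r ≤ ∑ i, m i := calc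
    1 - r = ∑ i, (B.coord i c - r * B.coord i 0) := by
      rw [Finset.sum_sub_distrib, ← Finset.mul_sum, B.sum_coord_apply_eq_one,
        B.sum_coord_apply_eq_one, mul_one]
    _ ≤ ∑ i, m i := Finset.sum_le_sum fun i _ => le_max_right _ _
  obtain ⟨t, ht, hts⟩ :=
    Finset.univ.exists_le_sum_eq (fun i => le_max_left _ _) (sub_nonneg.2 hr₁) hσm
  obtain ⟨y, hy⟩ := B.exists_coord_eq (fun i => t i + r * B.coord i 0) (by
    rw [Finset.sum_add_distrib, hts, ← Finset.mul_sum, B.sum_coord_apply_eq_one]; ring)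
  refine ⟨y, ?_⟩
  rw [B.smul_convexHull_add_singleton_eq hr₀, B.smul_convexHull_add_singleton_eq hr₀,
    B.convexHull_eq_nonneg_coord]
  simp only [hy, add_sub_cancel_right]
  exact ⟨fun w ⟨hwc, hwS⟩ i => (ht i).2.trans (max_le (hwS i) (hwc i)),
    fun w hw i => (ht i).1.trans (hw i)⟩

end AffineBasis

theorem stmt1_general {n : ℕ} (x : Fin (n + 1) → EuclideanSpace ℝ (Fin n))
    (hx : AffineIndependent ℝ x)
    (T : Set (EuclideanSpace ℝ (Fin n))) (hT : T = convexHull ℝ (Set.range x))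
    (r : ℝ) (hr : r ∈ Set.Ioo (0:ℝ) 1) (c : EuclideanSpace ℝ (Fin n)) :
    ∃ y : EuclideanSpace ℝ (Fin n),
      (r • T + {c}) ∩ T ⊆ r • T + {y} ∧ r • T + {y} ⊆ T := by
  have hspan : affineSpan ℝ (range x) = ⊤ :=
    hx.affineSpan_eq_top_iff_card_eq_finrank_add_one.2 (by simp)
  subst hT
  exact AffineBasis.exists_inter_subset_smul_convexHull_add_singleton_subset ⟨x, hx, hspan⟩
    hr.1 hr.2.le c

/-- If `T` is a simplex, `r ∈ (0,1)`, and the homothetic copy `rT + x` meets `T`,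
then there is `y` with `(rT + x) ∩ T ⊆ rT + y ⊆ T`. -/
theorem stmt1 {n : ℕ} (x : Fin (n + 1) → EuclideanSpace ℝ (Fin n))
    (hx : AffineIndependent ℝ x)
    (T : Set (EuclideanSpace ℝ (Fin n))) (hT : T = convexHull ℝ (Set.range x))
    (r : ℝ) (hr : r ∈ Set.Ioo (0:ℝ) 1) (c : EuclideanSpace ℝ (Fin n))
    (hne : ((r • T + {c}) ∩ T).Nonempty) :
    ∃ y : EuclideanSpace ℝ (Fin n),
      (r • T + {c}) ∩ T ⊆ r • T + {y} ∧ r • T + {y} ⊆ T :=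
  stmt1_general x hx T hT r hr c
end

section
/- Fractal homogeneity lemma: let T ⊆ ℝⁿ be a simplex of volume 1 with vertices x₀,…,xₙ, let A ⊆ T be measurable containing all vertices of T with |A| = 1 − δ, let t ∈ (0, 1/2], λ = 1 − t, and δ(A;t) = |(tA + (1−t)A) \ A|. Define families 𝒯_{i,k} of translates of λⁱT by: 𝒯_{i,0} = {(1−λⁱ)xⱼ + λⁱT : 0 ≤ j ≤ n} and 𝒯_{i,k+1} = {λB₁ + (1−λ)B₂ : B₁, B₂ ∈ 𝒯_{i,k}}. Then for every T' ∈ 𝒯_{i,k}, writing (λⁱA)_{T'} for the translate of λⁱA under the translation carrying λⁱT to T', one has |(λⁱA)_{T'} \ A| ≤ (i + 2k)·δ(A;t). -/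
/-!
The corner translates `(1 - λⁱ)y + λⁱA` arise from `A` by `i` successive averages
`C ↦ ty + λC` with a vertex `y ∈ A`, and each adds at most `δ(A;t)` to `|C \ A|`, since
`ty + λ(C ∩ A) ⊆ tA + λA`. Averaging two translates `C₁, C₂` of `λⁱA` with `|Cⱼ \ A| ≤ M` gives
a translate `C` with `|C \ A| ≤ M + 2δ(A;t)`: by Brunn–Minkowski the average `K` of `C₁ ∩ A` and
`C₂ ∩ A`, a subset of `tA + λA`, has measure at least `min |Cⱼ ∩ A| ≥ |λⁱA| - M`, whereas the
average `W ⊇ C ∪ K` of `C₁` and `C₂` is a translate of `λⁱ(tA + λA)`, of measure at most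
`|λⁱA| + δ(A;t)`. Brunn–Minkowski itself is proved by induction on the dimension, through the
one-dimensional Prékopa–Leindler inequality for the volumes of slices.
-/

open MeasureTheory Set
open scoped ENNReal NNReal Pointwise

/-- The family `𝒯_{i,k}` obtained from an initial family `T0` of sets by `k` rounds
of Minkowski `λ`-weighted averaging. -/
def avgFamily {n : ℕ} (lam : ℝ) (T0 : Set (Set (EuclideanSpace ℝ (Fin n)))) :
    ℕ → Set (Set (EuclideanSpace ℝ (Fin n)))
  | 0 => T0
  | (k + 1) => {B | ∃ B1 ∈ avgFamily lam T0 k, ∃ B2 ∈ avgFamily lam T0 k,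
      B = lam • B1 + (1 - lam) • B2}

namespace ENNReal

theorem min_le_rpow_mul_rpow {x y : ℝ≥0∞} {l t : ℝ} (hl : 0 ≤ l) (ht : 0 ≤ t) (hlt : l + t = 1) :
    min x y ≤ x ^ l * y ^ t :=
  calc min x y = min x y ^ (l + t) := by rw [hlt, rpow_one]
    _ = min x y ^ l * min x y ^ t := rpow_add_of_nonneg _ _ hl ht
    _ ≤ x ^ l * y ^ t :=
        mul_le_mul' (rpow_le_rpow (min_le_left _ _) hl) (rpow_le_rpow (min_le_right _ _) ht)

theorem rpow_mul_rpow_le_add {x y : ℝ≥0∞} {l t : ℝ} (hl : 0 < l) (ht : 0 < t) (hlt : l + t = 1) :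
    x ^ l * y ^ t ≤ ENNReal.ofReal l * x + ENNReal.ofReal t * y := by
  rcases eq_or_ne x ∞ with rfl | hx
  · simp [hl]
  rcases eq_or_ne y ∞ with rfl | hy
  · simp [ht]
  lift x to ℝ≥0 using hx
  lift y to ℝ≥0 using hy
  have hw : l.toNNReal + t.toNNReal = 1 := by
    rw [← Real.toNNReal_add hl.le ht.le, hlt, Real.toNNReal_one]
  have := NNReal.geom_mean_le_arith_mean2_weighted _ _ x y hw
  rw [Real.coe_toNNReal _ hl.le, Real.coe_toNNReal _ ht.le] at this
  rw [← coe_rpow_of_nonneg _ hl.le, ← coe_rpow_of_nonneg _ ht.le, ENNReal.ofReal, ENNReal.ofReal]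
  exact_mod_cast this

theorem div_rpow_mul_div_rpow_eq_one {F G : ℝ≥0∞} (hF₀ : F ≠ 0) (hF : F ≠ ∞) (hG₀ : G ≠ 0)
    (hG : G ≠ ∞) {l t : ℝ} (hl : 0 ≤ l) (ht : 0 ≤ t) (hlt : l + t = 1) :
    (F ^ l * G ^ t / F) ^ l * (F ^ l * G ^ t / G) ^ t = 1 := by
  set Z := F ^ l * G ^ t
  have hFl : F ^ l ≠ ∞ := rpow_ne_top_of_nonneg hl hF
  have hGt : G ^ t ≠ ∞ := rpow_ne_top_of_nonneg ht hG
  have hZ₀ : Z ≠ 0 := mul_ne_zero (rpow_pos (pos_iff_ne_zero.2 hF₀) hF).ne'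
    (rpow_pos (pos_iff_ne_zero.2 hG₀) hG).ne'
  rw [div_rpow_of_nonneg _ _ hl, div_rpow_of_nonneg _ _ ht, div_eq_mul_inv, div_eq_mul_inv]
  calc Z ^ l * (F ^ l)⁻¹ * (Z ^ t * (G ^ t)⁻¹) = Z ^ (l + t) * ((F ^ l)⁻¹ * (G ^ t)⁻¹) := by
        rw [rpow_add_of_nonneg _ _ hl ht]; ring
    _ = Z * Z⁻¹ := by rw [hlt, rpow_one, ENNReal.mul_inv (Or.inr hGt) (Or.inl hFl)]
    _ = 1 := ENNReal.mul_inv_cancel hZ₀ (mul_ne_top hFl hGt)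

end ENNReal

theorem lintegral_eq_lintegral_measure_ofReal_lt {α : Type*} [MeasurableSpace α] (μ : Measure α)
    {f : α → ℝ≥0∞} (hf : Measurable f) (hfin : ∀ x, f x ≠ ∞) :
    ∫⁻ x, f x ∂μ = ∫⁻ c in Ioi 0, μ {x | ENNReal.ofReal c < f x} :=
  calc ∫⁻ x, f x ∂μ = ∫⁻ x, ENNReal.ofReal (f x).toReal ∂μ := by
        simp only [ENNReal.ofReal_toReal (hfin _)]
    _ = ∫⁻ c in Ioi 0, μ {x | c < (f x).toReal} :=
        lintegral_eq_lintegral_meas_lt μ (ae_of_all _ fun _ => ENNReal.toReal_nonneg)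
          hf.ennreal_toReal.aemeasurable
    _ = ∫⁻ c in Ioi 0, μ {x | ENNReal.ofReal c < f x} :=
        setLIntegral_congr_fun measurableSet_Ioi fun c hc => by
          simp only [ENNReal.ofReal_lt_iff_lt_toReal (le_of_lt hc) (hfin _)]

theorem measure_diff_add_measure_le {α : Type*} [MeasurableSpace α] (μ : Measure α)
    {A C K S W : Set α} (hCW : C ⊆ W) (hKW : K ⊆ W) (hKS : K ⊆ S) (hK : MeasurableSet K) :
    μ (C \ A) + μ K ≤ μ W + μ (S \ A) := by
  have hsub : C \ A ⊆ (W \ K) ∪ (S \ A) := fun x ⟨hxC, hxA⟩ => by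
    by_cases hxK : x ∈ K
    · exact Or.inr ⟨hKS hxK, hxA⟩
    · exact Or.inl ⟨hCW hxC, hxK⟩
  calc μ (C \ A) + μ K ≤ μ (W \ K) + μ (S \ A) + μ K :=
        add_le_add ((measure_mono hsub).trans (measure_union_le _ _)) le_rfl
    _ = μ W + μ (S \ A) := by
        rw [add_right_comm, ← measure_sdiff_add_inter W hK, inter_eq_right.2 hKW]

namespace Real

/-- Translating `K` by `min L` and `L` by `max K` gives two subsets of `K + L` meeting in one
point. -/
theorem volume_add_volume_le_volume_add_of_isCompact {K L : Set ℝ} (hK : IsCompact K)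
    (hL : IsCompact L) (hKne : K.Nonempty) (hLne : L.Nonempty) :
    volume K + volume L ≤ volume (K + L) := by
  set a := sSup K
  set b := sInf L
  have haK : a ∈ K := hK.sSup_mem hKne
  have hbL : b ∈ L := hL.sInf_mem hLne
  have hbK : b +ᵥ K ⊆ K + L := by
    rintro _ ⟨k, hk, rfl⟩
    exact ⟨k, hk, b, hbL, add_comm k b⟩
  have hinter : (b +ᵥ K) ∩ (a +ᵥ L) ⊆ {a + b} := by
    rintro _ ⟨⟨k, hk, rfl⟩, ⟨l, hl, hlk⟩⟩
    have hka : k ≤ a := le_csSup hK.bddAbove hk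
    have hbl : b ≤ l := csInf_le hL.bddBelow hl
    simp only [vadd_eq_add] at hlk ⊢
    rw [mem_singleton_iff]
    linarith
  calc volume K + volume L = volume (b +ᵥ K) + volume (a +ᵥ L) := by
        rw [measure_vadd, measure_vadd]
    _ = volume ((b +ᵥ K) ∪ (a +ᵥ L)) + volume ((b +ᵥ K) ∩ (a +ᵥ L)) :=
        (measure_union_add_inter _ (hL.vadd a).measurableSet).symm
    _ ≤ volume (K + L) + volume ({a + b} : Set ℝ) :=
        add_le_add (measure_mono (union_subset hbK (vadd_set_subset_add haK)))
          (measure_mono hinter)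
    _ = volume (K + L) := by rw [measure_singleton, add_zero]

theorem volume_add_volume_le_volume_add {U V : Set ℝ} (hU : MeasurableSet U)
    (hV : MeasurableSet V) (hUne : U.Nonempty) (hVne : V.Nonempty) :
    volume U + volume V ≤ volume (U + V) := by
  obtain ⟨u, hu⟩ := hUne
  obtain ⟨v, hv⟩ := hVne
  rcases eq_or_ne (volume U) 0 with hU0 | hU0
  · rw [hU0, zero_add, ← measure_vadd volume u V]
    exact measure_mono (vadd_set_subset_add hu)
  rcases eq_or_ne (volume V) 0 with hV0 | hV0
  · rw [hV0, add_zero, ← measure_vadd volume v U, add_comm U V]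
    exact measure_mono (vadd_set_subset_add hv)
  refine le_of_forall_lt fun c hc => ?_
  obtain ⟨a, ha, b, hb, hcab⟩ := ENNReal.exists_lt_add_of_lt_add hc hU0 hV0
  obtain ⟨K, hKU, hK, haK⟩ := hU.exists_lt_isCompact ha
  obtain ⟨L, hLV, hL, hbL⟩ := hV.exists_lt_isCompact hb
  calc c < a + b := hcab
    _ ≤ volume (insert u K) + volume (insert v L) :=
        add_le_add (haK.le.trans (measure_mono (subset_insert _ _)))
          (hbL.le.trans (measure_mono (subset_insert _ _)))
    _ ≤ volume (insert u K + insert v L) :=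
        volume_add_volume_le_volume_add_of_isCompact (hK.insert u) (hL.insert v)
          (insert_nonempty _ _) (insert_nonempty _ _)
    _ ≤ volume (U + V) :=
        measure_mono (add_subset_add (insert_subset hu hKU) (insert_subset hv hLV))

section PrekopaLeindler

variable {f g h : ℝ → ℝ≥0∞} {l t : ℝ}

theorem weighted_volume_superlevel_le (hf : Measurable f) (hg : Measurable g)
    (hfg : ⨆ s, f s = ⨆ r, g r) (hl : 0 < l) (ht : 0 < t)
    (key : ∀ s r, min (f s) (g r) ≤ h (l * s + t * r)) (c : ℝ≥0∞) :
    ENNReal.ofReal l * volume {s | c < f s} + ENNReal.ofReal t * volume {r | c < g r}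
      ≤ volume {u | c < min (h u) (⨆ s, f s)} := by
  set U := {s | c < f s}
  set V := {r | c < g r}
  rcases lt_or_ge c (⨆ s, f s) with hc | hc
  · have hUV : l • U + t • V ⊆ {u | c < min (h u) (⨆ s, f s)} := by
      rintro _ ⟨_, ⟨s, hs, rfl⟩, _, ⟨r, hr, rfl⟩, rfl⟩
      exact lt_min ((lt_min hs hr).trans_le (key s r)) hc
    calc ENNReal.ofReal l * volume U + ENNReal.ofReal t * volume V
        = volume (l • U) + volume (t • V) := by
          simp only [Measure.addHaar_smul, Module.finrank_self, pow_one, abs_of_pos hl,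
            abs_of_pos ht]
      _ ≤ volume (l • U + t • V) :=
          volume_add_volume_le_volume_add ((measurableSet_lt measurable_const hf).const_smul₀ l)
            ((measurableSet_lt measurable_const hg).const_smul₀ t)
            (Nonempty.smul_set (lt_iSup_iff.mp hc)) (Nonempty.smul_set (lt_iSup_iff.mp (hc.trans_eq hfg)))
      _ ≤ _ := measure_mono hUV
  · have hU : U = ∅ := eq_empty_of_forall_notMem fun s hs =>
      (hs.trans_le (le_iSup f s)).not_ge hc
    have hV : V = ∅ := eq_empty_of_forall_notMem fun r hr =>
      (hr.trans_le (hfg ▸ le_iSup g r)).not_ge hc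
    simp [hU, hV]

theorem weighted_lintegral_le_of_min_le (hf : Measurable f) (hg : Measurable g)
    (hh : Measurable h) (hfg : ⨆ s, f s = ⨆ r, g r) (hfin : ⨆ s, f s ≠ ∞) (hl : 0 < l)
    (ht : 0 < t) (key : ∀ s r, min (f s) (g r) ≤ h (l * s + t * r)) :
    ENNReal.ofReal l * (∫⁻ s, f s) + ENNReal.ofReal t * ∫⁻ r, g r ≤ ∫⁻ u, h u := by
  set Z := ⨆ s, f s
  have hmeas : ∀ φ : ℝ → ℝ≥0∞, Measurable fun c : ℝ => volume {s | ENNReal.ofReal c < φ s} :=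
    fun φ => Antitone.measurable fun c₁ c₂ hc => measure_mono fun s hs =>
      (ENNReal.ofReal_le_ofReal hc).trans_lt hs
  calc ENNReal.ofReal l * (∫⁻ s, f s) + ENNReal.ofReal t * ∫⁻ r, g r
      ≤ ∫⁻ u, min (h u) Z := by
        rw [lintegral_eq_lintegral_measure_ofReal_lt volume hf
            fun s => ne_top_of_le_ne_top hfin (le_iSup f s),
          lintegral_eq_lintegral_measure_ofReal_lt volume hg
            fun r => ne_top_of_le_ne_top hfin (hfg ▸ le_iSup g r),
          lintegral_eq_lintegral_measure_ofReal_lt volume (hh.min measurable_const)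
            fun u => ne_top_of_le_ne_top hfin (min_le_right _ _),
          ← lintegral_const_mul _ (hmeas f), ← lintegral_const_mul _ (hmeas g),
          ← lintegral_add_left ((hmeas f).const_mul _)]
        exact setLIntegral_mono' measurableSet_Ioi fun c _ =>
          weighted_volume_superlevel_le hf hg hfg hl ht key _
    _ ≤ ∫⁻ u, h u := lintegral_mono fun u => min_le_left _ _

theorem prekopa_leindler (hf : Measurable f) (hg : Measurable g) (hh : Measurable h)
    (hF : ⨆ s, f s ≠ ∞) (hG : ⨆ r, g r ≠ ∞) (hl : 0 < l) (ht : 0 < t) (hlt : l + t = 1)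
    (key : ∀ s r, f s ^ l * g r ^ t ≤ h (l * s + t * r)) :
    (∫⁻ s, f s) ^ l * (∫⁻ r, g r) ^ t ≤ ∫⁻ u, h u := by
  set F := ⨆ s, f s
  set G := ⨆ r, g r
  rcases eq_or_ne F 0 with hF₀ | hF₀
  · rw [ENNReal.iSup_eq_zero.mp hF₀ |> funext, lintegral_zero, ENNReal.zero_rpow_of_pos hl,
      zero_mul]
    exact zero_le
  rcases eq_or_ne G 0 with hG₀ | hG₀
  · rw [ENNReal.iSup_eq_zero.mp hG₀ |> funext, lintegral_zero, ENNReal.zero_rpow_of_pos ht,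
      mul_zero]
    exact zero_le
  -- rescaling by `a` and `b` equalises the suprema of `f` and `g` and keeps `f ^ l * g ^ t`
  set Z := F ^ l * G ^ t
  set a := Z / F
  set b := Z / G
  have hab : a ^ l * b ^ t = 1 :=
    ENNReal.div_rpow_mul_div_rpow_eq_one hF₀ hF hG₀ hG hl.le ht.le hlt
  have haf : ⨆ s, a * f s = Z := by rw [← ENNReal.mul_iSup, ENNReal.div_mul_cancel hF₀ hF]
  have hbg : ⨆ r, b * g r = Z := by rw [← ENNReal.mul_iSup, ENNReal.div_mul_cancel hG₀ hG]
  have key' : ∀ s r, min (a * f s) (b * g r) ≤ h (l * s + t * r) := fun s r =>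
    calc min (a * f s) (b * g r) ≤ (a * f s) ^ l * (b * g r) ^ t :=
          ENNReal.min_le_rpow_mul_rpow hl.le ht.le hlt
      _ = a ^ l * b ^ t * (f s ^ l * g r ^ t) := by
          rw [ENNReal.mul_rpow_of_nonneg _ _ hl.le, ENNReal.mul_rpow_of_nonneg _ _ ht.le]; ring
      _ ≤ h (l * s + t * r) := by rw [hab, one_mul]; exact key s r
  calc (∫⁻ s, f s) ^ l * (∫⁻ r, g r) ^ t
      = a ^ l * b ^ t * ((∫⁻ s, f s) ^ l * (∫⁻ r, g r) ^ t) := by rw [hab, one_mul]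
    _ = (∫⁻ s, a * f s) ^ l * (∫⁻ r, b * g r) ^ t := by
        rw [lintegral_const_mul _ hf, lintegral_const_mul _ hg,
          ENNReal.mul_rpow_of_nonneg _ _ hl.le, ENNReal.mul_rpow_of_nonneg _ _ ht.le]
        ring
    _ ≤ ENNReal.ofReal l * (∫⁻ s, a * f s) + ENNReal.ofReal t * ∫⁻ r, b * g r :=
        ENNReal.rpow_mul_rpow_le_add hl ht hlt
    _ ≤ ∫⁻ u, h u := weighted_lintegral_le_of_min_le (hf.const_mul a) (hg.const_mul b) hh
        (haf.trans hbg.symm) (haf ▸ ENNReal.mul_ne_top (ENNReal.rpow_ne_top_of_nonneg hl.le hF)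
          (ENNReal.rpow_ne_top_of_nonneg ht.le hG)) hl ht key'

end PrekopaLeindler

end Real

section BrunnMinkowski

variable {E F : Type*} [NormedAddCommGroup E] [NormedSpace ℝ E] [MeasurableSpace E]
  [NormedAddCommGroup F] [NormedSpace ℝ F] [MeasurableSpace F]

def SatisfiesBrunnMinkowski (μ : Measure E) : Prop :=
  ∀ ⦃l t : ℝ⦄, 0 < l → 0 < t → l + t = 1 → ∀ ⦃K₁ K₂ : Set E⦄, IsCompact K₁ → IsCompact K₂ →
    μ K₁ ^ l * μ K₂ ^ t ≤ μ (l • K₁ + t • K₂)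

theorem SatisfiesBrunnMinkowski.min_le {μ : Measure E} (hμ : SatisfiesBrunnMinkowski μ)
    {l t : ℝ} (hl : 0 < l) (ht : 0 < t) (hlt : l + t = 1) {K₁ K₂ : Set E} (hK₁ : IsCompact K₁)
    (hK₂ : IsCompact K₂) : min (μ K₁) (μ K₂) ≤ μ (l • K₁ + t • K₂) :=
  (ENNReal.min_le_rpow_mul_rpow hl.le ht.le hlt).trans (hμ hl ht hlt hK₁ hK₂)

theorem SatisfiesBrunnMinkowski.of_measurePreserving [BorelSpace E] {μ : Measure E}
    {ν : Measure F} (e : F ≃L[ℝ] E) (he : MeasurePreserving e ν μ)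
    (h : SatisfiesBrunnMinkowski ν) : SatisfiesBrunnMinkowski μ := by
  intro l t hl ht hlt K₁ K₂ hK₁ hK₂
  have hsub : l • (e ⁻¹' K₁) + t • (e ⁻¹' K₂) ⊆ e ⁻¹' (l • K₁ + t • K₂) := by
    rintro _ ⟨_, ⟨x, hx, rfl⟩, _, ⟨y, hy, rfl⟩, rfl⟩
    exact ⟨l • e x, smul_mem_smul_set hx, t • e y, smul_mem_smul_set hy, by simp⟩
  rw [← he.measure_preimage hK₁.measurableSet.nullMeasurableSet,
    ← he.measure_preimage hK₂.measurableSet.nullMeasurableSet,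
    ← he.measure_preimage ((hK₁.smul l).add (hK₂.smul t)).measurableSet.nullMeasurableSet]
  exact (h hl ht hlt (e.toHomeomorph.isCompact_preimage.2 hK₁)
    (e.toHomeomorph.isCompact_preimage.2 hK₂)).trans (measure_mono hsub)

theorem IsCompact.preimage_prodMk {X : Type*} [TopologicalSpace X] [T2Space X]
    {K : Set (ℝ × X)} (hK : IsCompact K) (s : ℝ) : IsCompact (Prod.mk s ⁻¹' K) :=
  (hK.image continuous_snd).of_isClosed_subset (hK.isClosed.preimage (.prodMk_right s))
    fun y hy => ⟨(s, y), hy, rfl⟩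

/-- By Fubini, this is the one-dimensional Prékopa–Leindler inequality for the volumes of the
slices, whose hypothesis is the inequality on `E` applied to two slices. -/
theorem SatisfiesBrunnMinkowski.volume_prod [BorelSpace E] {μ : Measure E} [SFinite μ]
    [IsFiniteMeasureOnCompacts μ] (h : SatisfiesBrunnMinkowski μ) :
    SatisfiesBrunnMinkowski ((volume : Measure ℝ).prod μ) := by
  intro l t hl ht hlt K₁ K₂ hK₁ hK₂
  set M := l • K₁ + t • K₂
  have hM : IsCompact M := (hK₁.smul l).add (hK₂.smul t)
  have hsup : ∀ {K : Set (ℝ × E)}, IsCompact K → ⨆ s, μ (Prod.mk s ⁻¹' K) ≠ ∞ := fun hK =>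
    ne_top_of_le_ne_top (hK.image continuous_snd).measure_lt_top.ne
      (iSup_le fun s => measure_mono fun y hy => ⟨(s, y), hy, rfl⟩)
  have hslice : ∀ s r, l • (Prod.mk s ⁻¹' K₁) + t • (Prod.mk r ⁻¹' K₂)
      ⊆ Prod.mk (l * s + t * r) ⁻¹' M := by
    rintro s r _ ⟨_, ⟨y₁, hy₁, rfl⟩, _, ⟨y₂, hy₂, rfl⟩, rfl⟩
    exact ⟨l • (s, y₁), smul_mem_smul_set hy₁, t • (r, y₂), smul_mem_smul_set hy₂, rfl⟩
  rw [Measure.prod_apply hK₁.measurableSet, Measure.prod_apply hK₂.measurableSet,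
    Measure.prod_apply hM.measurableSet]
  exact Real.prekopa_leindler (measurable_measure_prodMk_left hK₁.measurableSet)
    (measurable_measure_prodMk_left hK₂.measurableSet)
    (measurable_measure_prodMk_left hM.measurableSet) (hsup hK₁) (hsup hK₂) hl ht hlt
    fun s r => (h hl ht hlt (hK₁.preimage_prodMk s) (hK₂.preimage_prodMk r)).trans
      (measure_mono (hslice s r))

end BrunnMinkowski

theorem satisfiesBrunnMinkowski_volume_pi (n : ℕ) :
    SatisfiesBrunnMinkowski (volume : Measure (Fin n → ℝ)) := by
  induction n with
  | zero =>
    intro l t hl ht _ K₁ K₂ _ _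
    rcases K₁.eq_empty_or_nonempty with rfl | h₁
    · simp [ENNReal.zero_rpow_of_pos hl]
    rcases K₂.eq_empty_or_nonempty with rfl | h₂
    · simp [ENNReal.zero_rpow_of_pos ht]
    rw [Subsingleton.eq_univ_of_nonempty (h₁.smul_set.add h₂.smul_set),
      Subsingleton.eq_univ_of_nonempty h₁, Subsingleton.eq_univ_of_nonempty h₂]
    simp [volume_pi]
  | succ n ih =>
    have he : MeasurePreserving (Fin.consEquivL ℝ fun _ : Fin (n + 1) => ℝ) volume volume := by
      have hcons : ⇑(Fin.consEquivL ℝ fun _ : Fin (n + 1) => ℝ)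
          = (MeasurableEquiv.piFinSuccAbove (fun _ => ℝ) 0).symm := by
        funext p
        simp only [MeasurableEquiv.piFinSuccAbove_symm_apply, Fin.insertNthEquiv_zero]
        rfl
      rw [hcons]
      exact (volume_preserving_piFinSuccAbove (fun _ : Fin (n + 1) => ℝ) 0).symm
    exact ih.volume_prod.of_measurePreserving _ he

theorem satisfiesBrunnMinkowski_volume_euclideanSpace (n : ℕ) :
    SatisfiesBrunnMinkowski (volume : Measure (EuclideanSpace ℝ (Fin n))) :=
  (satisfiesBrunnMinkowski_volume_pi n).of_measurePreserving (EuclideanSpace.equiv (Fin n) ℝ).symm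
    (EuclideanSpace.volume_preserving_symm_measurableEquiv_toLp (Fin n)).symm

section Translates

variable {E : Type*} [AddCommGroup E] [Module ℝ E]

theorem image_smul_add_eq_singleton_add_smul (c : ℝ) (v : E) (S : Set E) :
    (fun p => c • p + v) '' S = {v} + c • S := by
  rw [singleton_add, ← image_smul, image_image]
  simp_rw [add_comm v]

theorem smul_singleton_add_smul_add_smul_singleton_add_smul (l t c : ℝ) (v₁ v₂ : E)
    (S₁ S₂ : Set E) :
    l • ({v₁} + c • S₁) + t • ({v₂} + c • S₂) = {l • v₁ + t • v₂} + c • (l • S₁ + t • S₂) := by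
  rw [smul_add, smul_add, smul_add, smul_set_singleton, smul_set_singleton, smul_smul, smul_smul,
    smul_smul, smul_smul, ← singleton_add_singleton, add_add_add_comm, mul_comm c, mul_comm c]

end Translates

theorem IsCompact.eq_of_singleton_add_eq {E : Type*} [NormedAddCommGroup E] [NormedSpace ℝ E]
    {S : Set E} (hS : IsCompact S) (hne : S.Nonempty) {v w : E} (h : {v} + S = {w} + S) :
    v = w := by
  by_contra hvw
  have hvw' : ‖v - w‖ ≠ 0 := norm_ne_zero_iff.2 (sub_ne_zero.2 hvw)
  obtain ⟨g, -, hg⟩ := exists_dual_vector ℝ (v - w) hvw'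
  obtain ⟨s, hs, hmax⟩ := hS.exists_isMaxOn hne g.continuous.continuousOn
  obtain ⟨w', hw', s', hs', hss'⟩ : v + s ∈ {w} + S := h ▸ add_mem_add rfl hs
  have hs's : s' = s + (v - w) := by
    rw [mem_singleton_iff.1 hw'] at hss'
    rw [eq_sub_of_add_eq' hss']; abel
  have hgs' : g s' = g s + ‖v - w‖ := by rw [hs's, map_add, hg]; rfl
  have hle : g s' ≤ g s := hmax hs'
  linarith [(norm_nonneg (v - w)).lt_of_ne' hvw']

section Geometry

variable {E : Type*} [NormedAddCommGroup E] [NormedSpace ℝ E] [MeasurableSpace E] [BorelSpace E]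
  [FiniteDimensional ℝ E] {μ : Measure E} [μ.IsAddHaarMeasure]

variable (μ) in
theorem measure_singleton_add_smul (v : E) (c : ℝ) (S : Set E) :
    μ ({v} + c • S) = ENNReal.ofReal |c ^ Module.finrank ℝ E| * μ S := by
  simp only [singleton_add, image_add_left, measure_preimage_add, Measure.addHaar_smul]

variable (μ) in
theorem measure_singleton_add_smul_le {c : ℝ} (hc₀ : 0 ≤ c) (hc₁ : c ≤ 1) (v : E) (S : Set E) :
    μ ({v} + c • S) ≤ μ S := by
  rw [measure_singleton_add_smul μ, abs_of_nonneg (pow_nonneg hc₀ _)]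
  exact mul_le_of_le_one_left zero_le (ENNReal.ofReal_le_one.2 (pow_le_one₀ hc₀ hc₁))

theorem measurableSet_singleton_add_smul {A : Set E} (hA : MeasurableSet A) (v : E) (c : ℝ) :
    MeasurableSet ({v} + c • A) := by
  rw [singleton_add, image_add_left]
  exact (hA.const_smul₀ c).preimage (measurable_const_add _)

theorem measure_singleton_add_smul_diff_le_add {A C : Set E} {y : E} (hy : y ∈ A) {l t : ℝ}
    (hl₀ : 0 ≤ l) (hl₁ : l ≤ 1) :
    μ (({t • y} + l • C) \ A) ≤ μ (C \ A) + μ ((t • A + l • A) \ A) := by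
  have hsub : ({t • y} + l • C) \ A ⊆ ({t • y} + l • (C \ A)) ∪ ((t • A + l • A) \ A) := by
    rintro _ ⟨⟨_, rfl, _, ⟨c, hc, rfl⟩, rfl⟩, hA⟩
    by_cases hcA : c ∈ A
    · exact Or.inr ⟨⟨t • y, smul_mem_smul_set hy, l • c, smul_mem_smul_set hcA, rfl⟩, hA⟩
    · exact Or.inl ⟨t • y, rfl, l • c, smul_mem_smul_set ⟨hc, hcA⟩, rfl⟩
  calc μ (({t • y} + l • C) \ A)
      ≤ μ ({t • y} + l • (C \ A)) + μ ((t • A + l • A) \ A) :=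
        (measure_mono hsub).trans (measure_union_le _ _)
    _ ≤ μ (C \ A) + μ ((t • A + l • A) \ A) :=
        add_le_add (measure_singleton_add_smul_le μ hl₀ hl₁ _ _) le_rfl

theorem measure_singleton_add_pow_smul_diff_le {A : Set E} {y : E} (hy : y ∈ A) {l t : ℝ}
    (hl₀ : 0 ≤ l) (hl₁ : l ≤ 1) (hlt : l + t = 1) (i : ℕ) :
    μ (({(1 - l ^ i) • y} + l ^ i • A) \ A) ≤ i * μ ((t • A + l • A) \ A) := by
  induction i with
  | zero => simp
  | succ i ih =>
    have hcorner : {(1 - l ^ (i + 1)) • y} + l ^ (i + 1) • A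
        = {t • y} + l • ({(1 - l ^ i) • y} + l ^ i • A) := by
      rw [smul_add, smul_set_singleton, smul_smul, smul_smul, ← add_assoc,
        singleton_add_singleton, ← add_smul, pow_succ']
      congr 3
      linear_combination -hlt
    rw [hcorner, Nat.cast_succ, add_one_mul]
    exact (measure_singleton_add_smul_diff_le_add hy hl₀ hl₁).trans (by gcongr)

theorem exists_isCompact_subset_translate_inter {A : Set E} (hA : MeasurableSet A)
    (hAfin : μ A ≠ ∞) {w : E} {c : ℝ} {M ε : ℝ≥0∞} (hw : μ (({w} + c • A) \ A) ≤ M)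
    (hε : ε ≠ 0) : ∃ K ⊆ ({w} + c • A) ∩ A, IsCompact K ∧
      ENNReal.ofReal |c ^ Module.finrank ℝ E| * μ A ≤ μ K + (M + ε) := by
  obtain ⟨K, hKsub, hK, hKε⟩ := ((measurableSet_singleton_add_smul hA w c).inter hA)
    |>.exists_isCompact_lt_add (ne_top_of_le_ne_top hAfin (measure_mono inter_subset_right)) hε
  refine ⟨K, hKsub, hK, ?_⟩
  calc ENNReal.ofReal |c ^ Module.finrank ℝ E| * μ A
      = μ (({w} + c • A) ∩ A) + μ (({w} + c • A) \ A) := by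
        rw [← measure_singleton_add_smul μ w c A, measure_inter_add_sdiff _ hA]
    _ ≤ μ K + ε + M := add_le_add hKε.le hw
    _ = μ K + (M + ε) := by ring

variable (μ) in
theorem measure_average_translates_le {l t c : ℝ} (hc₀ : 0 ≤ c) (hc₁ : c ≤ 1)
    (w₁ w₂ : E) (A : Set E) :
    μ (l • ({w₁} + c • A) + t • ({w₂} + c • A))
      ≤ ENNReal.ofReal |c ^ Module.finrank ℝ E| * μ A + μ ((t • A + l • A) \ A) := by
  have hγ : ENNReal.ofReal |c ^ Module.finrank ℝ E| ≤ 1 := ENNReal.ofReal_le_one.2 <| by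
    rw [abs_of_nonneg (pow_nonneg hc₀ _)]; exact pow_le_one₀ hc₀ hc₁
  rw [smul_singleton_add_smul_add_smul_singleton_add_smul, measure_singleton_add_smul,
    add_comm (l • A)]
  calc _ ≤ ENNReal.ofReal |c ^ Module.finrank ℝ E| * (μ A + μ ((t • A + l • A) \ A)) := by
        gcongr
        exact (measure_le_inter_add_sdiff _ _ A).trans
          (add_le_add (measure_mono inter_subset_right) le_rfl)
    _ ≤ _ := by rw [mul_add]; gcongr; exact mul_le_of_le_one_left zero_le hγ

theorem measure_average_translate_diff_le (hμ : SatisfiesBrunnMinkowski μ) {A : Set E}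
    (hA : MeasurableSet A) (hAfin : μ A ≠ ∞) {l t c : ℝ} (hl : 0 < l) (ht : 0 < t)
    (hlt : l + t = 1) (hc₀ : 0 ≤ c) (hc₁ : c ≤ 1) {w₁ w₂ : E} {M : ℝ≥0∞}
    (h₁ : μ (({w₁} + c • A) \ A) ≤ M) (h₂ : μ (({w₂} + c • A) \ A) ≤ M) :
    μ (({l • w₁ + t • w₂} + c • A) \ A) ≤ M + 2 * μ ((t • A + l • A) \ A) := by
  set D := μ ((t • A + l • A) \ A)
  set γ := ENNReal.ofReal |c ^ Module.finrank ℝ E|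
  set W := l • ({w₁} + c • A) + t • ({w₂} + c • A) with hW
  have hAsub : A ⊆ t • A + l • A := fun a ha =>
    ⟨t • a, smul_mem_smul_set ha, l • a, smul_mem_smul_set ha, by
      simp only [← add_smul, add_comm t, hlt, one_smul]⟩
  have hμW : μ W ≤ γ * μ A + D := measure_average_translates_le μ hc₀ hc₁ w₁ w₂ A
  refine ENNReal.le_of_forall_pos_le_add fun ε hε _ => ?_
  have hε' : (ε : ℝ≥0∞) ≠ 0 := by exact_mod_cast hε.ne'
  obtain ⟨K₁, hK₁sub, hK₁, hγ₁⟩ := exists_isCompact_subset_translate_inter hA hAfin h₁ hε'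
  obtain ⟨K₂, hK₂sub, hK₂, hγ₂⟩ := exists_isCompact_subset_translate_inter hA hAfin h₂ hε'
  set K := l • K₁ + t • K₂
  have hK : IsCompact K := (hK₁.smul l).add (hK₂.smul t)
  have hKW : K ⊆ W := add_subset_add (smul_set_mono (hK₁sub.trans inter_subset_left))
    (smul_set_mono (hK₂sub.trans inter_subset_left))
  have hKA : K ⊆ t • A + l • A := by
    rw [add_comm (t • A)]
    exact add_subset_add (smul_set_mono (hK₁sub.trans inter_subset_right))
      (smul_set_mono (hK₂sub.trans inter_subset_right))
  have hCW : {l • w₁ + t • w₂} + c • A ⊆ W := by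
    rw [hW, smul_singleton_add_smul_add_smul_singleton_add_smul, add_comm (l • A)]
    exact add_subset_add_left (smul_set_mono hAsub)
  have hγK : γ * μ A ≤ μ K + (M + ε) :=
    calc γ * μ A ≤ min (μ K₁) (μ K₂) + (M + ε) := by
          rw [← min_add_add_right]; exact le_min hγ₁ hγ₂
      _ ≤ μ K + (M + ε) := by gcongr; exact hμ.min_le hl ht hlt hK₁ hK₂
  refine ENNReal.le_of_add_le_add_left (hK.measure_lt_top (μ := μ)).ne ?_
  calc μ K + μ (({l • w₁ + t • w₂} + c • A) \ A)
      ≤ μ W + D := by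
        rw [add_comm]; exact measure_diff_add_measure_le μ hCW hKW hKA hK.measurableSet
    _ ≤ μ K + (M + ε) + D + D := by gcongr; exact hμW.trans (by gcongr)
    _ = μ K + (M + 2 * D + ε) := by ring

end Geometry

theorem exists_singleton_add_and_volume_diff_le_of_mem_avgFamily {n : ℕ}
    {x : Fin (n + 1) → EuclideanSpace ℝ (Fin n)} {T A : Set (EuclideanSpace ℝ (Fin n))}
    (hT : Convex ℝ T) (hA : MeasurableSet A) (hAfin : volume A ≠ ∞) (hxA : ∀ j, x j ∈ A)
    {l t : ℝ} (hl : 0 < l) (ht : 0 < t) (hlt : l + t = 1) (i k : ℕ)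
    {B : Set (EuclideanSpace ℝ (Fin n))}
    (hB : B ∈ avgFamily l {S | ∃ j, S = (fun p => (1 - l ^ i) • x j + l ^ i • p) '' T} k) :
    ∃ w, B = {w} + l ^ i • T ∧
      volume (({w} + l ^ i • A) \ A) ≤ (i + 2 * k : ℕ) * volume ((t • A + l • A) \ A) := by
  induction k generalizing B with
  | zero =>
    obtain ⟨j, rfl⟩ := hB
    refine ⟨(1 - l ^ i) • x j, ?_, ?_⟩
    · simp_rw [add_comm ((1 - l ^ i) • x j)]
      exact image_smul_add_eq_singleton_add_smul _ _ _
    · simpa using measure_singleton_add_pow_smul_diff_le (hxA j) hl.le (by linarith) hlt i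
  | succ k ih =>
    obtain ⟨B₁, hB₁, B₂, hB₂, rfl⟩ := hB
    obtain ⟨w₁, rfl, h₁⟩ := ih hB₁
    obtain ⟨w₂, rfl, h₂⟩ := ih hB₂
    refine ⟨l • w₁ + t • w₂, ?_, ?_⟩
    · rw [show 1 - l = t by linarith, smul_singleton_add_smul_add_smul_singleton_add_smul,
        ← hT.add_smul hl.le ht.le, hlt, one_smul]
    · calc _ ≤ (i + 2 * k : ℕ) * volume ((t • A + l • A) \ A)
              + 2 * volume ((t • A + l • A) \ A) :=
            measure_average_translate_diff_le (satisfiesBrunnMinkowski_volume_euclideanSpace n) hA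
              hAfin hl ht hlt (pow_nonneg hl.le i) (pow_le_one₀ hl.le (by linarith)) h₁ h₂
        _ = (i + 2 * (k + 1) : ℕ) * volume ((t • A + l • A) \ A) := by push_cast; ring

theorem stmt5_general {n : ℕ} (x : Fin (n + 1) → EuclideanSpace ℝ (Fin n))
    (T : Set (EuclideanSpace ℝ (Fin n))) (hT : T = convexHull ℝ (Set.range x))
    (A : Set (EuclideanSpace ℝ (Fin n))) (hA : A ⊆ T) (hmA : MeasurableSet A)
    (hvx : Set.range x ⊆ A)
    (t : ℝ) (ht : t ∈ Set.Ioc (0:ℝ) (1/2)) (lam : ℝ) (hlam : lam = 1 - t)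
    (i k : ℕ) (T' : Set (EuclideanSpace ℝ (Fin n)))
    (hT' : T' ∈ avgFamily lam
      {S | ∃ j : Fin (n + 1), S = (fun p => (1 - lam ^ i) • x j + lam ^ i • p) '' T} k)
    (v : EuclideanSpace ℝ (Fin n)) (hv : T' = (fun p => lam ^ i • p + v) '' T) :
    volume (((fun p => lam ^ i • p + v) '' A) \ A) ≤
      (i + 2 * k : ℕ) * volume ((t • A + (1 - t) • A) \ A) := by
  have hlt : lam + t = 1 := by rw [hlam]; ring
  have hTc : IsCompact T := hT ▸ (finite_range x).isCompact_convexHull (𝕜 := ℝ)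
  have hTne : T.Nonempty := ⟨x 0, hT ▸ subset_convexHull ℝ _ ⟨0, rfl⟩⟩
  obtain ⟨w, rfl, hw⟩ := exists_singleton_add_and_volume_diff_le_of_mem_avgFamily
    (hT ▸ convex_convexHull ℝ _) hmA
    (ne_top_of_le_ne_top hTc.measure_lt_top.ne (measure_mono hA)) (fun j => hvx ⟨j, rfl⟩)
    (by linarith [ht.2]) ht.1 hlt i k hT'
  have hvw : v = w := (hTc.smul _).eq_of_singleton_add_eq hTne.smul_set
    (by rw [← image_smul_add_eq_singleton_add_smul, ← hv])
  rwa [image_smul_add_eq_singleton_add_smul, hvw, show 1 - t = lam by linarith]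

/-- Fractal homogeneity lemma: for a simplex `T` of volume 1 with vertices `x j`,
`A ⊆ T` containing the vertices with `|A| = 1 - δ`, `t ∈ (0,1/2]`, `λ = 1 - t`,
and `T' ∈ 𝒯_{i,k}` (where `𝒯_{i,0}` consists of the corner `λⁱ`-scaled simplices
`(1-λⁱ)x j + λⁱT` and `𝒯_{i,k+1}` of `λ`-averages of pairs from `𝒯_{i,k}`), the
translate `(λⁱA)_{T'}` of `λⁱA` carrying `λⁱT` to `T'` satisfies
`|(λⁱA)_{T'} \ A| ≤ (i + 2k)·δ(A;t)`. -/
theorem stmt5 {n : ℕ} (x : Fin (n + 1) → EuclideanSpace ℝ (Fin n))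
    (hx : AffineIndependent ℝ x)
    (T : Set (EuclideanSpace ℝ (Fin n))) (hT : T = convexHull ℝ (Set.range x))
    (hTvol : volume T = 1)
    (A : Set (EuclideanSpace ℝ (Fin n))) (hA : A ⊆ T) (hmA : MeasurableSet A)
    (hvx : Set.range x ⊆ A)
    (δ : ℝ) (hδ : 0 ≤ δ) (hAvol : volume A = ENNReal.ofReal (1 - δ))
    (t : ℝ) (ht : t ∈ Set.Ioc (0:ℝ) (1/2)) (lam : ℝ) (hlam : lam = 1 - t)
    (i k : ℕ) (T' : Set (EuclideanSpace ℝ (Fin n)))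
    (hT' : T' ∈ avgFamily lam
      {S | ∃ j : Fin (n + 1), S = (fun p => (1 - lam ^ i) • x j + lam ^ i • p) '' T} k)
    (v : EuclideanSpace ℝ (Fin n)) (hv : T' = (fun p => lam ^ i • p + v) '' T) :
    volume (((fun p => lam ^ i • p + v) '' A) \ A) ≤
      (i + 2 * k : ℕ) * volume ((t • A + (1 - t) • A) \ A) :=
  stmt5_general x T hT A hA hmA hvx t ht lam hlam i k T' hT' v hv
end

section
/- Simplex averaging density lemma: let T ⊆ ℝⁿ be a simplex with vertices x₀,…,xₙ, let α, μ ∈ (0,1) and λ ∈ [1/2, 1). Define 𝒯₀(λ;μ;T) = {μT + (1−μ)xⱼ : 0 ≤ j ≤ n} and 𝒯_k(λ;μ;T) = {λB₁ + (1−λ)B₂ : B₁, B₂ ∈ 𝒯_{k−1}(λ;μ;T)}. Then every translate T' ⊆ T of αⁿμT is completely contained in some element of 𝒯_{k'}(λ;μ;T), where k' = Σ_{j=1}^{n} ⌈log(α^{j−1}(1−α)μ)/log(λ)⌉. -/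
open MeasureTheory Set
open scoped ENNReal Pointwise

/-!
A translate of `μT` is `μT + ∑ sᵢ xᵢ` with a weight vector `s` of total mass `1 - μ`, and
Minkowski `λ`-averaging of translates averages their weight vectors; the corners of `𝒯₀` carry
the weights `(1 - μ) eⱼ`. The hypothesis `T' ⊆ T` says `T' = αⁿμT + ∑ uᵢ xᵢ` with `u ≥ 0` of mass
`1 - αⁿμ`, and `T'` lies in `μT + ∑ sᵢ xᵢ` as soon as `s ≤ u`. Such an `s` is built one vertex
at a time: either the corner at vertex `j` already fits, or `s = θ s' + (1 - θ)(1 - μ) eⱼ` with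
`s'` found recursively on the remaining vertices and `θ` a `λ`-adic number of depth `k`
approximating its target within `λᵏ`. The slacks `αʲ(1 - α)μ` granted to these approximations add
up to `(1 - αⁿ)μ`, exactly the surplus mass of `u` over that of `s`.
-/

def avgIter {E : Type*} [Add E] [SMul ℝ E] (lam : ℝ) (A : Set E) : ℕ → Set E
  | 0 => A
  | k + 1 => {p | ∃ a ∈ avgIter lam A k, ∃ b ∈ avgIter lam A k, p = lam • a + (1 - lam) • b}

section AvgIter

variable {E F : Type*}

section Add

variable [Add E] [SMul ℝ E] [Add F] [SMul ℝ F] {lam : ℝ}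

theorem avgIter_avgIter (A : Set E) (K : ℕ) :
    ∀ k, avgIter lam (avgIter lam A K) k = avgIter lam A (K + k)
  | 0 => rfl
  | k + 1 => by rw [← add_assoc, avgIter, avgIter, avgIter_avgIter A K k]

theorem mapsTo_avgIter {f : E → F} {A : Set E} {B : Set F}
    (hf : ∀ a b, f (lam • a + (1 - lam) • b) = lam • f a + (1 - lam) • f b)
    (hAB : MapsTo f A B) : ∀ k, MapsTo f (avgIter lam A k) (avgIter lam B k)
  | 0 => hAB
  | k + 1 => by
    rintro _ ⟨a, ha, b, hb, rfl⟩
    exact ⟨f a, mapsTo_avgIter hf hAB k ha, f b, mapsTo_avgIter hf hAB k hb, hf a b⟩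

end Add

variable [AddCommGroup E] [Module ℝ E] {lam : ℝ}

theorem avgIter_subset_avgIter_succ (A : Set E) (k : ℕ) :
    avgIter lam A k ⊆ avgIter lam A (k + 1) :=
  fun p hp => ⟨p, hp, p, hp, by module⟩

theorem avgIter_mono (A : Set E) : Monotone (avgIter lam A) :=
  monotone_nat_of_le_succ (avgIter_subset_avgIter_succ A)

theorem subset_avgIter (A : Set E) (k : ℕ) : A ⊆ avgIter lam A k :=
  avgIter_mono A k.zero_le

theorem avgIter_subset_of_convex {A S : Set E} (hlam₀ : 0 ≤ lam) (hlam₁ : lam ≤ 1)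
    (hS : Convex ℝ S) (hAS : A ⊆ S) : ∀ k, avgIter lam A k ⊆ S
  | 0 => hAS
  | k + 1 => by
    rintro _ ⟨a, ha, b, hb, rfl⟩
    exact hS (avgIter_subset_of_convex hlam₀ hlam₁ hS hAS k ha)
      (avgIter_subset_of_convex hlam₀ hlam₁ hS hAS k hb) hlam₀ (by linarith) (by ring)

theorem combo_mem_avgIter {A : Set E} {K k : ℕ} {p q : E} {θ : ℝ}
    (hp : p ∈ avgIter lam A K) (hq : q ∈ avgIter lam A K)
    (hθ : θ ∈ avgIter lam ({0, 1} : Set ℝ) k) :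
    θ • p + (1 - θ) • q ∈ avgIter lam A (K + k) := by
  rw [← avgIter_avgIter]
  refine mapsTo_avgIter (f := fun θ : ℝ => θ • p + (1 - θ) • q) (fun a b => ?_) ?_ k hθ
  · simp only [smul_eq_mul]
    module
  · rintro _ (rfl | rfl)
    · simpa using hq
    · simpa using hp

end AvgIter

theorem avgFamily_eq_avgIter {n : ℕ} (lam : ℝ) (T0 : Set (Set (EuclideanSpace ℝ (Fin n)))) :
    ∀ k, avgFamily lam T0 k = avgIter lam T0 k
  | 0 => rfl
  | k + 1 => by simp only [avgFamily, avgIter, avgFamily_eq_avgIter lam T0 k]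

theorem exists_mem_avgIter_zero_one_near {lam : ℝ} (hlam : 1 / 2 ≤ lam) (hlam₁ : lam < 1) :
    ∀ (k : ℕ) {t : ℝ}, 0 ≤ t → t ≤ 1 →
      ∃ θ ∈ avgIter lam ({0, 1} : Set ℝ) k, t - lam ^ k ≤ θ ∧ θ ≤ t
  | 0, t, ht₀, ht₁ => ⟨0, Or.inl rfl, by linarith, ht₀⟩
  | k + 1, t, ht₀, ht₁ => by
    have hlam₀ : 0 < lam := by linarith
    have h01 := subset_avgIter (lam := lam) ({0, 1} : Set ℝ) k
    -- Greedy `lam`-adic digit: average with `0` if `t ≤ lam`, else with `1`; `1 / 2 ≤ lam` keeps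
    -- the rescaled remainder in `[0, 1]`.
    rcases le_or_gt t lam with ht | ht
    · obtain ⟨θ, hθ, hlo, hhi⟩ := exists_mem_avgIter_zero_one_near hlam hlam₁ k
        (div_nonneg ht₀ hlam₀.le) ((div_le_one hlam₀).mpr ht)
      refine ⟨lam * θ, ⟨θ, hθ, 0, h01 (Or.inl rfl), by simp⟩, ?_, ?_⟩
      · rw [le_div_iff₀ hlam₀] at hhi
        have := mul_le_mul_of_nonneg_left hlo hlam₀.le
        rw [mul_sub, mul_div_cancel₀ _ hlam₀.ne'] at this
        linarith [pow_succ' lam k]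
      · rw [le_div_iff₀ hlam₀] at hhi
        linarith
    · obtain ⟨θ, hθ, hlo, hhi⟩ := exists_mem_avgIter_zero_one_near hlam hlam₁ k
        (t := (t - (1 - lam)) / lam) (div_nonneg (by linarith) hlam₀.le)
        ((div_le_one hlam₀).mpr (by linarith))
      refine ⟨lam * θ + (1 - lam), ⟨θ, hθ, 1, h01 (Or.inr rfl), by simp⟩, ?_, ?_⟩
      · have := mul_le_mul_of_nonneg_left hlo hlam₀.le
        rw [mul_sub, mul_div_cancel₀ _ hlam₀.ne'] at this
        linarith [pow_succ' lam k]
      · rw [le_div_iff₀ hlam₀] at hhi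
        linarith

section Coefficients

variable {ι : Type*} [DecidableEq ι]

theorem single_le_indicator {J : Finset ι} {u : ι → ℝ} (hu : ∀ i ∈ J, 0 ≤ u i) {j : ι}
    (hj : j ∈ J) {c : ℝ} (hc : c ≤ u j) : Pi.single j c ≤ (J : Set ι).indicator u := by
  intro i
  rcases eq_or_ne i j with rfl | hij
  · simpa [hj] using hc
  · simpa [hij] using Set.indicator_nonneg hu i

theorem combo_single_le_indicator {J : Finset ι} {u s : ι → ℝ} {j : ι} (hj : j ∈ J)
    {θ c : ℝ} (hθ : 0 < θ) (hs : s ≤ (↑(J.erase j) : Set ι).indicator (θ⁻¹ • u))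
    (hcj : (1 - θ) * c ≤ u j) :
    θ • s + (1 - θ) • Pi.single j c ≤ (J : Set ι).indicator u := by
  intro i
  have hsi := mul_le_mul_of_nonneg_left (hs i) hθ.le
  rcases eq_or_ne i j with rfl | hij
  · rw [Set.indicator_of_notMem (by simp), mul_zero] at hsi
    simp only [Pi.add_apply, Pi.smul_apply, smul_eq_mul, Pi.single_eq_same,
      Set.indicator_of_mem (Finset.mem_coe.mpr hj)]
    linarith
  · by_cases hiJ : i ∈ J
    · simp_all [hθ.ne']
    · simp_all

end Coefficients

theorem exists_mem_avgIter_single_le_indicator {ι : Type*} [DecidableEq ι] {lam c : ℝ}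
    {ε : ℕ → ℝ} {kk : ℕ → ℕ} (hlam : 1 / 2 ≤ lam) (hlam₁ : lam < 1) (hc : 0 < c)
    (hε : ∀ j, 0 ≤ ε j) (hkk : ∀ j, c * lam ^ kk j ≤ ε j) :
    ∀ (m : ℕ) (J : Finset ι), J.card = m + 1 → ∀ u : ι → ℝ, (∀ i ∈ J, 0 ≤ u i) →
      c + ∑ j ∈ Finset.range m, ε j ≤ ∑ i ∈ J, u i →
      ∃ s ∈ avgIter lam (range fun j => Pi.single j c) (∑ j ∈ Finset.range m, kk j),
        s ≤ (J : Set ι).indicator u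
  | 0, J, hJ, u, hu, hbudget => by
    obtain ⟨j, rfl⟩ := Finset.card_eq_one.mp hJ
    simp only [Finset.range_zero, Finset.sum_empty, add_zero, Finset.sum_singleton] at hbudget
    exact ⟨_, ⟨j, rfl⟩, single_le_indicator hu (Finset.mem_singleton_self j) hbudget⟩
  | m + 1, J, hJ, u, hu, hbudget => by
    obtain ⟨j, hj⟩ := Finset.card_pos.mp (by omega : 0 < J.card)
    rw [Finset.sum_range_succ] at hbudget ⊢
    set δ := ∑ i ∈ Finset.range m, ε i
    have hδ : 0 ≤ δ := Finset.sum_nonneg fun i _ => hε i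
    have hsplit := Finset.add_sum_erase J u hj
    by_cases hcj : c ≤ u j
    · exact ⟨_, subset_avgIter _ _ ⟨j, rfl⟩, single_le_indicator hu hj hcj⟩
    suffices step : ∀ θ ∈ avgIter lam ({0, 1} : Set ℝ) (kk m), 0 < θ → (1 - θ) * c ≤ u j →
        θ * (c + δ) ≤ ∑ i ∈ J.erase j, u i →
        ∃ s ∈ avgIter lam (range fun j => Pi.single j c) (∑ j ∈ Finset.range m, kk j + kk m),
          s ≤ (J : Set ι).indicator u by
      by_cases hεj : u j ≤ ε m
      · -- the slack `ε m` covers `u j`, so the corner `j` is not needed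
        exact step 1 (subset_avgIter _ _ (Or.inr rfl)) one_pos (by simpa using hu j hj)
          (by linarith)
      obtain ⟨θ, hθ, hlo, hhi⟩ := exists_mem_avgIter_zero_one_near hlam hlam₁ (kk m)
        (t := (c - u j + ε m) / c) (div_nonneg (by linarith [hε m]) hc.le)
        ((div_le_one hc).mpr (by linarith))
      rw [le_div_iff₀ hc] at hhi
      have hlo' := mul_le_mul_of_nonneg_left hlo hc.le
      rw [mul_sub, mul_div_cancel₀ _ hc.ne'] at hlo'
      have hθ₀ : 0 < θ := by nlinarith [hkk m]
      exact step θ hθ hθ₀ (by nlinarith [hkk m]) (by nlinarith)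
    intro θ hθ hθ₀ hθj hθbudget
    obtain ⟨s, hs, hsu⟩ := exists_mem_avgIter_single_le_indicator hlam hlam₁ hc hε hkk m
      (J.erase j) (by rw [Finset.card_erase_of_mem hj, hJ]; rfl) (θ⁻¹ • u)
      (fun i hi => by
        simpa using mul_nonneg (inv_nonneg.mpr hθ₀.le) (hu i (Finset.mem_of_mem_erase hi)))
      (by simpa [← Finset.mul_sum] using (le_inv_mul_iff₀ hθ₀).mpr hθbudget)
    exact ⟨_, combo_mem_avgIter hs (subset_avgIter _ _ ⟨j, rfl⟩) hθ,
      combo_single_le_indicator hj hθ₀ hsu hθj⟩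

section Translates

variable {ι E : Type*} [AddCommGroup E] [Module ℝ E]

theorem convexHull_range_eq_image_stdSimplex [Fintype ι] (x : ι → E) :
    convexHull ℝ (range x) = Fintype.linearCombination ℝ x '' stdSimplex ℝ ι := by
  classical
  rw [← convexHull_rangle_single_eq_stdSimplex, LinearMap.image_convexHull, ← range_comp]
  congr
  funext i
  simp

theorem Convex.combo_image_smul_add {T : Set E} (hT : Convex ℝ T) {lam : ℝ} (hlam₀ : 0 ≤ lam)
    (hlam₁ : lam ≤ 1) (mu : ℝ) (w₁ w₂ : E) :
    lam • ((fun p => mu • p + w₁) '' T) + (1 - lam) • ((fun p => mu • p + w₂) '' T) =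
      (fun p => mu • p + (lam • w₁ + (1 - lam) • w₂)) '' T := by
  ext z
  simp only [Set.mem_add, Set.mem_smul_set, Set.mem_image]
  constructor
  · rintro ⟨_, ⟨_, ⟨a, ha, rfl⟩, rfl⟩, _, ⟨_, ⟨b, hb, rfl⟩, rfl⟩, rfl⟩
    exact ⟨lam • a + (1 - lam) • b, hT ha hb hlam₀ (by linarith) (by ring), by module⟩
  · rintro ⟨a, ha, rfl⟩
    exact ⟨_, ⟨_, ⟨a, ha, rfl⟩, rfl⟩, _, ⟨_, ⟨a, ha, rfl⟩, rfl⟩, by module⟩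

theorem image_smul_add_linearCombination_subset [Fintype ι] (x : ι → E) {mu mu' : ℝ}
    (hmu : 0 < mu) (hmu' : 0 ≤ mu') {s u : ι → ℝ} (hsu : s ≤ u) (hs : ∑ i, s i = 1 - mu)
    (hu : ∑ i, u i = 1 - mu') :
    (fun p => mu' • p + Fintype.linearCombination ℝ x u) '' convexHull ℝ (range x) ⊆
      (fun p => mu • p + Fintype.linearCombination ℝ x s) '' convexHull ℝ (range x) := by
  rw [convexHull_range_eq_image_stdSimplex, image_image, image_image]
  rintro _ ⟨t, ⟨ht₀, ht₁⟩, rfl⟩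
  refine ⟨mu⁻¹ • (mu' • t + u - s), ⟨fun i => ?_, ?_⟩, ?_⟩
  · have := mul_nonneg hmu' (ht₀ i)
    have := hsu i
    simp only [Pi.smul_apply, Pi.add_apply, Pi.sub_apply, smul_eq_mul]
    exact mul_nonneg (inv_nonneg.mpr hmu.le) (by linarith)
  · simp only [Pi.smul_apply, Pi.add_apply, Pi.sub_apply, smul_eq_mul, ← Finset.mul_sum,
      Finset.sum_sub_distrib, Finset.sum_add_distrib, ht₁, hs, hu]
    field_simp
    ring
  · simp only [map_smul, map_add, map_sub, smul_sub, smul_inv_smul₀ hmu.ne']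
    abel

end Translates

theorem AffineBasis.exists_nonneg_weights_of_smul_add_mem_convexHull {ι E : Type*} [Fintype ι]
    [AddCommGroup E] [Module ℝ E] (b : AffineBasis ι ℝ E) {mu : ℝ} (hmu : mu < 1) {v : E}
    (hv : ∀ j, mu • b j + v ∈ convexHull ℝ (range b)) :
    ∃ u : ι → ℝ, 0 ≤ u ∧ ∑ i, u i = 1 - mu ∧ Fintype.linearCombination ℝ b u = v := by
  have hmu' : (1 - mu) ≠ 0 := by linarith
  set p := (1 - mu)⁻¹ • v
  refine ⟨(1 - mu) • fun i => b.coord i p, fun i => ?_, ?_, ?_⟩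
  · by_cases hi : ∃ j, j ≠ i
    · obtain ⟨j, hji⟩ := hi
      have hline : mu • b j + v = AffineMap.lineMap p (b j) mu := by
        rw [AffineMap.lineMap_apply_module, smul_inv_smul₀ hmu', add_comm]
      have := (b.convexHull_eq_nonneg_coord ▸ hv j) i
      rw [hline, AffineMap.apply_lineMap, b.coord_apply_ne hji.symm,
        AffineMap.lineMap_apply_module] at this
      simpa using this
    · push Not at hi
      have := b.sum_coord_apply_eq_one p
      rw [Finset.sum_eq_single i (fun j _ hj => absurd (hi j) hj) (by simp)] at this
      simp [this]
      linarith
  · simp [← Finset.mul_sum]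
  · rw [map_smul, Fintype.linearCombination_apply, b.linear_combination_coord_eq_self,
      smul_inv_smul₀ hmu']

theorem sum_eq_of_mem_avgIter_single {ι : Type*} [Fintype ι] [DecidableEq ι] {lam c : ℝ}
    (hlam₀ : 0 ≤ lam) (hlam₁ : lam ≤ 1) {k : ℕ} {s : ι → ℝ}
    (hs : s ∈ avgIter lam (range fun j => Pi.single j c) k) : ∑ i, s i = c := by
  have hlin : IsLinearMap ℝ fun s : ι → ℝ => ∑ i, s i :=
    ⟨fun _ _ => Finset.sum_add_distrib, fun _ _ => (Finset.mul_sum ..).symm⟩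
  refine avgIter_subset_of_convex hlam₀ hlam₁ (convex_hyperplane hlin c) ?_ k hs
  rintro _ ⟨j, rfl⟩
  simp

theorem image_smul_add_linearCombination_mem_avgFamily {n : ℕ} {ι : Type*} [Fintype ι]
    [DecidableEq ι] (x : ι → EuclideanSpace ℝ (Fin n)) {T : Set (EuclideanSpace ℝ (Fin n))}
    (hT : Convex ℝ T) {mu lam c : ℝ} (hlam₀ : 0 ≤ lam) (hlam₁ : lam ≤ 1) {k : ℕ} {s : ι → ℝ}
    (hs : s ∈ avgIter lam (range fun j => Pi.single j c) k) :
    (fun p => mu • p + Fintype.linearCombination ℝ x s) '' T ∈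
      avgFamily lam {S0 | ∃ j, S0 = (fun p => mu • p + c • x j) '' T} k := by
  rw [avgFamily_eq_avgIter]
  refine mapsTo_avgIter (f := fun s => (fun p => mu • p + Fintype.linearCombination ℝ x s) '' T)
    (fun a b => ?_) ?_ k hs
  · rw [map_add, map_smul, map_smul, hT.combo_image_smul_add hlam₀ hlam₁]
  · rintro _ ⟨j, rfl⟩
    exact ⟨j, by simp only [Fintype.linearCombination_apply_single]⟩

theorem pow_toNat_ceil_log_div_log_le {lam ε : ℝ} (hlam₀ : 0 < lam) (hlam₁ : lam < 1)
    (hε : 0 < ε) : lam ^ ⌈Real.log ε / Real.log lam⌉.toNat ≤ ε := by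
  have hlog : Real.log lam < 0 := Real.log_neg hlam₀ hlam₁
  rw [← Real.log_le_log_iff (pow_pos hlam₀ _) hε, Real.log_pow,
    ← div_le_iff_of_neg hlog]
  exact (Int.le_ceil _).trans (by exact_mod_cast Int.self_le_toNat _)

theorem exists_mem_avgFamily_image_subset {n : ℕ} {ι : Type*} [Fintype ι] [DecidableEq ι]
    (x : ι → EuclideanSpace ℝ (Fin n)) {mu mu' lam : ℝ} (hmu₀ : 0 < mu) (hmu₁ : mu < 1)
    (hmu' : 0 ≤ mu') (hlam : 1 / 2 ≤ lam) (hlam₁ : lam < 1) {ε : ℕ → ℝ} {kk : ℕ → ℕ}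
    (hε : ∀ j, 0 ≤ ε j) (hkk : ∀ j, (1 - mu) * lam ^ kk j ≤ ε j) {m : ℕ}
    (hm : Fintype.card ι = m + 1) {u : ι → ℝ} (hu : 0 ≤ u)
    (hbudget : 1 - mu + ∑ j ∈ Finset.range m, ε j ≤ 1 - mu') (husum : ∑ i, u i = 1 - mu') :
    ∃ S ∈ avgFamily lam
        {S0 | ∃ j, S0 = (fun p => mu • p + (1 - mu) • x j) '' convexHull ℝ (range x)}
        (∑ j ∈ Finset.range m, kk j),
      (fun p => mu' • p + Fintype.linearCombination ℝ x u) '' convexHull ℝ (range x) ⊆ S := by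
  obtain ⟨s, hs, hsu⟩ := exists_mem_avgIter_single_le_indicator hlam hlam₁ (sub_pos.mpr hmu₁)
    hε hkk m Finset.univ hm u (fun i _ => hu i) (husum ▸ hbudget)
  rw [Finset.coe_univ, Set.indicator_univ] at hsu
  exact ⟨_, image_smul_add_linearCombination_mem_avgFamily x (convex_convexHull ℝ _)
    (by linarith) hlam₁.le hs, image_smul_add_linearCombination_subset x hmu₀ hmu'
    hsu (sum_eq_of_mem_avgIter_single (by linarith) hlam₁.le hs) husum⟩

/-- Simplex averaging density lemma: for a simplex `T` with vertices `x j`,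
`α, μ ∈ (0,1)`, `λ ∈ [1/2,1)`, every translate `T' ⊆ T` of `αⁿμT` is completely
contained in some element of `𝒯_{k'}(λ;μ;T)` where
`k' = Σ_{j=1}^{n} ⌈log(α^{j-1}(1-α)μ)/log(λ)⌉` and `𝒯₀(λ;μ;T)` consists of the
corner simplices `μT + (1-μ)x j`. -/
theorem stmt9 {n : ℕ} (x : Fin (n + 1) → EuclideanSpace ℝ (Fin n))
    (hx : AffineIndependent ℝ x)
    (T : Set (EuclideanSpace ℝ (Fin n))) (hT : T = convexHull ℝ (Set.range x))
    (α mu lam : ℝ) (hα : α ∈ Set.Ioo (0:ℝ) 1) (hmu : mu ∈ Set.Ioo (0:ℝ) 1)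
    (hlam : lam ∈ Set.Ico (1/2 : ℝ) 1)
    (k' : ℕ)
    (hk' : (k' : ℤ) = ∑ j ∈ Finset.range n, ⌈Real.log (α ^ j * (1 - α) * mu) / Real.log lam⌉)
    (v : EuclideanSpace ℝ (Fin n))
    (hsub : (fun p => (α ^ n * mu) • p + v) '' T ⊆ T) :
    ∃ S ∈ avgFamily lam
        {S0 | ∃ j : Fin (n + 1), S0 = (fun p => mu • p + (1 - mu) • x j) '' T} k',
      (fun p => (α ^ n * mu) • p + v) '' T ⊆ S := by
  subst hT
  obtain ⟨hα₀, hα₁⟩ := hα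
  obtain ⟨hmu₀, hmu₁⟩ := hmu
  obtain ⟨hlam₀, hlam₁⟩ := hlam
  let b : AffineBasis (Fin (n + 1)) ℝ (EuclideanSpace ℝ (Fin n)) :=
    ⟨x, hx, hx.affineSpan_eq_top_iff_card_eq_finrank_add_one.mpr (by simp)⟩
  obtain ⟨u, hu, husum, rfl⟩ := b.exists_nonneg_weights_of_smul_add_mem_convexHull
    (mu := α ^ n * mu) (by nlinarith [pow_le_one₀ (n := n) hα₀.le hα₁.le])
    fun j => hsub ⟨x j, subset_convexHull ℝ _ ⟨j, rfl⟩, rfl⟩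
  set ε : ℕ → ℝ := fun j => α ^ j * (1 - α) * mu
  have hε : ∀ j, 0 < ε j ∧ ε j ≤ 1 := fun j =>
    ⟨by positivity, mul_le_one₀ (mul_le_one₀ (pow_le_one₀ hα₀.le hα₁.le) (by linarith)
      (by linarith)) hmu₀.le hmu₁.le⟩
  have hk : k' = ∑ j ∈ Finset.range n, ⌈Real.log (ε j) / Real.log lam⌉.toNat := by
    zify
    rw [hk']
    refine Finset.sum_congr rfl fun j _ => (Int.toNat_of_nonneg ?_).symm
    exact Int.ceil_nonneg (div_nonneg_of_nonpos (Real.log_nonpos (hε j).1.le (hε j).2)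
      (Real.log_nonpos (by linarith) hlam₁.le))
  rw [hk]
  refine exists_mem_avgFamily_image_subset x hmu₀ hmu₁ (by positivity) hlam₀ hlam₁
    (fun j => (hε j).1.le) (fun j => (mul_le_of_le_one_left (by positivity) (by linarith)).trans
      (pow_toNat_ceil_log_div_log_le (by linarith) hlam₁ (hε j).1)) (by simp) hu ?_ husum
  rw [← Finset.sum_mul, ← Finset.sum_mul, mul_comm _ (1 - α), mul_neg_geom_sum]
  linarith
end

section
/- For every convex polytope P ⊆ ℝⁿ there exists a point o ∈ P (taken as origin) with the property: for any b ∈ (0,1) there exists ε > 0 (depending on n, τ, b) such that for any measurable A ⊆ P, any τ ∈ (0,1/2], and any t ∈ [τ, 1−τ], if |P \ A| ≤ ε|P| then (1−b)P ⊆ tA + (1−t)A. -/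
/-!
Take `o` in the interior of `P`, with `ball o r ⊆ P`; by convexity every point `x` of the
shrunken copy `(1 - b)P` has `ball x (b r) ⊆ P`. We have `x = t y + (1 - t) z` exactly when `z`
is the image of `y` under the homothety with centre `x` and ratio `-t / (1 - t)`, which maps
`ball x (τ b r)` into `ball x (b r)` and whose preimages enlarge volume by at most `τ⁻ⁿ`. If no
`y` in `ball x (τ b r)` had both `y` and `z` in `A`, that ball would be covered by `P \ A` and a
homothetic preimage of it, so its volume would be at most `(1 + τ⁻ⁿ) |P \ A|`; taking `ε` small
rules this out.
-/

open MeasureTheory Set Metric Module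
open scoped ENNReal Pointwise

theorem AffineMap.homothety_mem_ball {E : Type*} [SeminormedAddCommGroup E] [NormedSpace ℝ E]
    {x y : E} {c r : ℝ} (hc : c ≠ 0) (hy : y ∈ ball x r) :
    AffineMap.homothety x c y ∈ ball x (|c| * r) := by
  rw [mem_ball, dist_homothety_center, Real.norm_eq_abs, dist_comm]
  exact mul_lt_mul_of_pos_left hy (abs_pos.2 hc)

theorem Convex.ball_homothety_subset {E : Type*} [SeminormedAddCommGroup E] [NormedSpace ℝ E]
    {s : Set E} (hs : Convex ℝ s) {o p : E} {r b : ℝ} (hball : ball o r ⊆ s) (hp : p ∈ s)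
    (hb0 : 0 < b) (hb1 : b ≤ 1) :
    ball (AffineMap.homothety o (1 - b) p) (b * r) ⊆ s := by
  intro z hz
  set q := o + b⁻¹ • (z - AffineMap.homothety o (1 - b) p)
  have hq : q ∈ s := hball <| by
    rw [mem_ball, dist_eq_norm, add_sub_cancel_left, norm_smul, Real.norm_eq_abs, abs_inv,
      abs_of_pos hb0, inv_mul_lt_iff₀ hb0, ← dist_eq_norm]
    exact hz
  have hz : (1 - b) • p + b • q = z := by
    simp only [q, smul_add, smul_inv_smul₀ hb0.ne', AffineMap.homothety_apply, vsub_eq_sub,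
      vadd_eq_add]
    module
  exact hz ▸ hs hp hq (by linarith) hb0.le (by ring)

theorem mem_smul_add_smul_of_homothety_mem {E : Type*} [AddCommGroup E] [Module ℝ E]
    {A : Set E} {t : ℝ} (ht : t ≠ 1) {x y : E} (hy : y ∈ A)
    (hy' : AffineMap.homothety x (-(t / (1 - t))) y ∈ A) : x ∈ t • A + (1 - t) • A := by
  convert add_mem_add (smul_mem_smul_set hy) (smul_mem_smul_set hy') using 1
  have : 1 - t ≠ 0 := sub_ne_zero.2 ht.symm
  simp only [AffineMap.homothety_apply, vsub_eq_sub, vadd_eq_add, smul_add, smul_smul]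
  field_simp
  module

theorem div_one_sub_le_inv {τ t : ℝ} (hτ : 0 < τ) (ht : t ∈ Icc τ (1 - τ)) :
    t / (1 - t) ≤ τ⁻¹ := by
  obtain ⟨htτ, htτ'⟩ := ht
  rw [div_le_iff₀ (by linarith), inv_mul_eq_div, le_div_iff₀ hτ]
  nlinarith

section AddHaar

variable {E : Type*} [NormedAddCommGroup E] [NormedSpace ℝ E] [MeasurableSpace E] [BorelSpace E]
  [FiniteDimensional ℝ E] (μ : Measure E) [μ.IsAddHaarMeasure]

theorem Convex.interior_nonempty_of_addHaar_pos {s : Set E} (hs : Convex ℝ s) (h : 0 < μ s) :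
    (interior s).Nonempty := by
  rw [nonempty_iff_ne_empty]
  intro hempty
  have hsub : s ⊆ frontier s := by
    simpa [closure_eq_interior_union_frontier, hempty] using subset_closure (s := s)
  exact h.ne' (measure_mono_null hsub (hs.addHaar_frontier μ))

theorem MeasureTheory.Measure.addHaar_preimage_homothety (x : E) {c : ℝ} (hc : c ≠ 0)
    (s : Set E) :
    μ (AffineMap.homothety x c ⁻¹' s) = ENNReal.ofReal |c⁻¹ ^ finrank ℝ E| * μ s := by
  change μ (AffineEquiv.homothetyUnitsMulHom x (Units.mk0 c hc) ⁻¹' s) = _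
  rw [← AffineEquiv.image_symm, AffineEquiv.coe_homothetyUnitsMulHom_apply_symm,
    addHaar_image_homothety, Units.val_inv_eq_inv_val, Units.val_mk0]

theorem mem_smul_add_smul_of_measure_lt {P A U : Set E} {x : E} {t : ℝ} (ht0 : 0 < t)
    (ht1 : t < 1) (hU : U ⊆ P) (hhU : MapsTo (AffineMap.homothety x (-(t / (1 - t)))) U P)
    (hμ : μ (P \ A) * (1 + ENNReal.ofReal (((1 - t) / t) ^ finrank ℝ E)) < μ U) :
    x ∈ t • A + (1 - t) • A := by
  by_contra hx
  have hcover : U ⊆ (P \ A) ∪ AffineMap.homothety x (-(t / (1 - t))) ⁻¹' (P \ A) := by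
    intro y hy
    by_cases hyA : y ∈ A
    · exact Or.inr ⟨hhU hy, fun hA => hx (mem_smul_add_smul_of_homothety_mem ht1.ne hyA hA)⟩
    · exact Or.inl ⟨hU hy, hyA⟩
  have h1t : 0 < 1 - t := sub_pos.2 ht1
  have hscale : |(-(t / (1 - t)))⁻¹ ^ finrank ℝ E| = ((1 - t) / t) ^ finrank ℝ E := by
    rw [inv_neg, inv_div, abs_pow, abs_neg, abs_of_pos (div_pos h1t ht0)]
  refine hμ.not_ge ((measure_mono hcover).trans ((measure_union_le _ _).trans ?_))
  rw [Measure.addHaar_preimage_homothety μ x (neg_ne_zero.2 (div_pos ht0 h1t).ne'), hscale,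
    mul_add, mul_one, mul_comm]

theorem mem_smul_add_smul_of_ball_subset {P A : Set E} {x : E} {R τ t : ℝ} (hR : ball x R ⊆ P)
    (hR0 : 0 ≤ R) (hτ : 0 < τ) (ht : t ∈ Icc τ (1 - τ))
    (hμ : μ (P \ A) * (1 + ENNReal.ofReal (τ⁻¹ ^ finrank ℝ E)) < μ (ball x (τ * R))) :
    x ∈ t • A + (1 - t) • A := by
  obtain ⟨htτ, htτ'⟩ := ht
  have ht0 : 0 < t := hτ.trans_le htτ
  have hk0 : 0 < t / (1 - t) := div_pos ht0 (by linarith)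
  have hk : t / (1 - t) ≤ τ⁻¹ := div_one_sub_le_inv hτ ⟨htτ, htτ'⟩
  have hk' : (1 - t) / t ≤ τ⁻¹ := by
    simpa using div_one_sub_le_inv hτ (t := 1 - t) ⟨by linarith, by linarith⟩
  have hτR : τ * R ≤ R := mul_le_of_le_one_left hR0 (by linarith)
  have hkτR : |-(t / (1 - t))| * (τ * R) ≤ R := by
    rw [abs_neg, abs_of_pos hk0, ← mul_assoc]
    refine mul_le_of_le_one_left hR0 ?_
    calc t / (1 - t) * τ ≤ τ⁻¹ * τ := by gcongr
      _ = 1 := inv_mul_cancel₀ hτ.ne'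
  refine mem_smul_add_smul_of_measure_lt μ ht0 (by linarith) ((ball_subset_ball hτR).trans hR)
    (fun y hy => hR <| ball_subset_ball hkτR <|
      AffineMap.homothety_mem_ball (neg_ne_zero.2 hk0.ne') hy)
    (lt_of_le_of_lt ?_ hμ)
  gcongr
  exact div_nonneg (by linarith) ht0.le

end AddHaar

/-- For every convex polytope `P ⊆ ℝⁿ` (of positive volume) there is a point `o ∈ P`
such that: for any `b ∈ (0,1)` and `τ ∈ (0,1/2]` there exists `ε > 0` such that for any
measurable `A ⊆ P` and `t ∈ [τ,1-τ]`, if `|P \ A| ≤ ε|P|` then the scaling of `P` by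
factor `1-b` about `o` is contained in `tA + (1-t)A`. -/
theorem stmt11 {n : ℕ} (V : Finset (EuclideanSpace ℝ (Fin n)))
    (P : Set (EuclideanSpace ℝ (Fin n)))
    (hP : P = convexHull ℝ (V : Set (EuclideanSpace ℝ (Fin n))))
    (hPvol : 0 < volume P) :
    ∃ o ∈ P, ∀ b ∈ Set.Ioo (0:ℝ) 1, ∀ τ ∈ Set.Ioc (0:ℝ) (1/2), ∃ ε : ℝ, 0 < ε ∧
      ∀ A : Set (EuclideanSpace ℝ (Fin n)), A ⊆ P → MeasurableSet A →
        ∀ t ∈ Set.Icc τ (1 - τ),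
          volume (P \ A) ≤ ENNReal.ofReal ε * volume P →
          (fun p => (1 - b) • (p - o) + o) '' P ⊆ t • A + (1 - t) • A := by
  have hconv : Convex ℝ P := hP ▸ convex_convexHull ℝ _
  have hPfin : volume P ≠ ⊤ :=
    (hP ▸ V.finite_toSet.isCompact_convexHull ℝ : IsCompact P).measure_lt_top.ne
  obtain ⟨o, ho⟩ := hconv.interior_nonempty_of_addHaar_pos volume hPvol
  obtain ⟨r, hr, hballo⟩ := isOpen_iff.1 isOpen_interior o ho
  refine ⟨o, interior_subset ho, fun b ⟨hb0, hb1⟩ τ ⟨hτ, _⟩ => ?_⟩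
  set K := volume P * (1 + ENNReal.ofReal (τ⁻¹ ^ finrank ℝ (EuclideanSpace ℝ (Fin n))))
  have hball : volume (ball (0 : EuclideanSpace ℝ (Fin n)) (τ * (b * r))) ≠ 0 :=
    (measure_ball_pos volume _ (by positivity)).ne'
  obtain ⟨ε, hε, hεK⟩ := ENNReal.exists_nnreal_pos_mul_lt (a := K) (by finiteness) hball
  refine ⟨ε, hε, fun A _ _ t ht hA => ?_⟩
  rintro _ ⟨p, hp, rfl⟩
  refine mem_smul_add_smul_of_ball_subset volume
    (hconv.ball_homothety_subset (hballo.trans interior_subset) hp hb0 hb1.le) (by positivity) hτ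
    ht ?_
  rw [Measure.addHaar_ball_center]
  calc volume (P \ A) * _ ≤ ENNReal.ofReal ε * volume P * _ := by gcongr
    _ < _ := by rwa [ENNReal.ofReal_coe_nnreal, mul_assoc]
end

section
/- Sharpness example for the exponents: let n ≥ 2, τ ∈ (0,1/2], t = τ, λ > 0, and A = ({(0,0)} ∪ [λ, 1+λ] × [0,1]) × [0,1]^{n−2} ⊆ ℝⁿ. Then |co(A) \ A| = λ/2 and δ(A;t) = |(tA + (1−t)A) \ A| = τλ(2 − 3τ) (for λ sufficiently small). -/
open MeasureTheory Set
open scoped ENNReal Pointwise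

/-!
Write `ℝⁿ = ℝ² × ℝⁿ⁻²`, a linear volume-preserving splitting. Then `A = S × [0,1]ⁿ⁻²` with
`S = {0} ∪ R`, `R = [λ, 1+λ] × [0,1]`. Because the cube is convex, both `co(A) \ A` and
`(τA + (1-τ)A) \ A` are products of the corresponding planar sets with the cube, so everything
happens in the plane. There `co(S) \ S` is the triangle `0 < x < λ, 0 ≤ y ≤ x/λ` of area `λ/2`,
and `τS + (1-τ)S = S ∪ τR ∪ (1-τ)R` by convexity of `R`; for `λ ≤ τ ≤ 1/2` the part outside `S`
is the union of the rectangles `[τλ, λ) × [0, τ]` and `[(1-τ)λ, λ) × [0, 1-τ]`, of total area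
`τλ(2 - 3τ)`.
-/

lemma LinearEquiv.convexHull_preimage {𝕜 E F : Type*} [Semiring 𝕜] [PartialOrder 𝕜]
    [AddCommMonoid E] [Module 𝕜 E] [AddCommMonoid F] [Module 𝕜 F] (e : E ≃ₗ[𝕜] F) (s : Set F) :
    convexHull 𝕜 (e ⁻¹' s) = e ⁻¹' convexHull 𝕜 s := by
  rw [← e.image_symm_eq_preimage, ← e.image_symm_eq_preimage]
  exact (e.symm.toLinearMap.image_convexHull s).symm

lemma LinearEquiv.preimage_smul_add_smul {R E F : Type*} [Semiring R] [AddCommMonoid E]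
    [Module R E] [AddCommMonoid F] [Module R F] (e : E ≃ₗ[R] F) (a b : R) (s t : Set F) :
    e ⁻¹' (a • s + b • t) = a • e ⁻¹' s + b • e ⁻¹' t := by
  simp only [← e.image_symm_eq_preimage, Set.image_add, image_smul_set]

section Product

variable {𝕜 F G : Type*} [Field 𝕜] [LinearOrder 𝕜] [IsStrictOrderedRing 𝕜]
  [AddCommGroup F] [Module 𝕜 F] [AddCommGroup G] [Module 𝕜 G]

lemma convexHull_prod_diff_prod (s : Set F) {t : Set G} (ht : Convex 𝕜 t) :
    convexHull 𝕜 (s ×ˢ t) \ s ×ˢ t = (convexHull 𝕜 s \ s) ×ˢ t := by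
  rw [convexHull_prod, ht.convexHull_eq, prod_sdiff_prod, sdiff_self, prod_empty, empty_union]

lemma smul_add_smul_prod_diff_prod (s : Set F) {t : Set G} (ht : Convex 𝕜 t) {a b : 𝕜}
    (ha : 0 ≤ a) (hb : 0 ≤ b) (hab : a + b = 1) :
    (a • (s ×ˢ t) + b • (s ×ˢ t)) \ s ×ˢ t = ((a • s + b • s) \ s) ×ˢ t := by
  rw [smul_set_prod, smul_set_prod, prod_add_prod_comm, ← ht.add_smul ha hb, hab, one_smul,
    prod_sdiff_prod, sdiff_self, prod_empty, empty_union]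

end Product

def splitTwo (m : ℕ) : (Fin (m + 2) → ℝ) ≃ₗ[ℝ] (ℝ × ℝ) × (Fin m → ℝ) where
  toFun y := ((y 0, y 1), fun j => y j.succ.succ)
  invFun q := Fin.cons q.1.1 (Fin.cons q.1.2 q.2)
  map_add' _ _ := rfl
  map_smul' _ _ := rfl
  left_inv y := by
    ext i
    refine Fin.cases ?_ (fun j => Fin.cases ?_ (fun k => ?_) j) i <;> simp
  right_inv q := by ext <;> simp

lemma measurePreserving_splitTwo (m : ℕ) : MeasurePreserving (splitTwo m) := by
  have h := volume_preserving_prodAssoc.symm.comp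
    ((MeasurePreserving.id volume).prod (volume_preserving_piFinSuccAbove (fun _ => ℝ) 0)
      |>.comp (volume_preserving_piFinSuccAbove (fun _ : Fin (m + 2) => ℝ) 0))
  convert h using 1
  ext y <;> simp [splitTwo, MeasurableEquiv.prodAssoc, Fin.tail]

lemma volume_preimage_splitTwo_prod_Icc (m : ℕ) (T : Set (ℝ × ℝ)) :
    volume (splitTwo m ⁻¹' (T ×ˢ Icc 0 1)) = volume T := by
  rw [(measurePreserving_splitTwo m).measure_preimage_emb
      (splitTwo m).toContinuousLinearEquiv.toHomeomorph.measurableEmbedding,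
    Measure.volume_eq_prod, Measure.prod_prod, Real.volume_Icc_pi]
  simp

def originAndSquare (lam : ℝ) : Set (ℝ × ℝ) := {0} ∪ Icc lam (1 + lam) ×ˢ Icc 0 1

lemma setOf_eq_preimage_splitTwo (m : ℕ) (lam : ℝ) :
    {y : Fin (m + 2) → ℝ |
        ((y ⟨0, by omega⟩ = 0 ∧ y ⟨1, by omega⟩ = 0) ∨
          (y ⟨0, by omega⟩ ∈ Icc lam (1 + lam) ∧ y ⟨1, by omega⟩ ∈ Icc (0 : ℝ) 1)) ∧
        ∀ i : Fin (m + 2), 2 ≤ (i : ℕ) → y i ∈ Icc (0 : ℝ) 1} =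
      splitTwo m ⁻¹' (originAndSquare lam ×ˢ Icc 0 1) := by
  ext y
  simp [splitTwo, originAndSquare, Prod.ext_iff, Pi.le_def, Fin.forall_fin_succ, forall_and,
    and_assoc, and_left_comm]

lemma convexHull_originAndSquare {lam : ℝ} (hlam : 0 < lam) :
    convexHull ℝ (originAndSquare lam) =
      {p | 0 ≤ p.2 ∧ p.2 ≤ 1 ∧ lam * p.2 ≤ p.1 ∧ p.1 ≤ 1 + lam} := by
  apply Subset.antisymm
  · refine convexHull_min ?_ ?_
    · rintro p (rfl | ⟨⟨hx₁, hx₂⟩, hy₁, hy₂⟩)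
      · simp only [mem_ofPred_eq, Prod.fst_zero, Prod.snd_zero]
        exact ⟨le_rfl, zero_le_one, by simp, by linarith⟩
      · exact ⟨hy₁, hy₂, by nlinarith, hx₂⟩
    · rintro p ⟨hp₁, hp₂, hp₃, hp₄⟩ q ⟨hq₁, hq₂, hq₃, hq₄⟩ a b ha hb hab
      simp only [mem_ofPred_eq, Prod.fst_add, Prod.snd_add, Prod.smul_fst, Prod.smul_snd,
        smul_eq_mul]
      exact ⟨by positivity, by nlinarith, by nlinarith, by nlinarith⟩
  · rintro ⟨x, y⟩ ⟨hy₀, hy₁, hyx, hx⟩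
    rcases le_or_gt lam x with hlx | hxl
    · exact subset_convexHull ℝ _ (Or.inr ⟨⟨hlx, hx⟩, hy₀, hy₁⟩)
    rcases (show 0 ≤ x by nlinarith).eq_or_lt with rfl | hx₀
    · obtain rfl : y = 0 := by nlinarith
      exact subset_convexHull ℝ _ (Or.inl rfl)
    -- `(x, y)` lies on the segment from the origin to the point `(lam, lam * y / x)` of the square
    have horigin : (0 : ℝ × ℝ) ∈ originAndSquare lam := Or.inl rfl
    have hedge : (lam, lam * y / x) ∈ originAndSquare lam :=
      Or.inr ⟨⟨le_rfl, by linarith⟩, by positivity, by rw [div_le_one hx₀]; exact hyx⟩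
    refine segment_subset_convexHull horigin hedge
      ⟨1 - x / lam, x / lam, by rw [sub_nonneg, div_le_one hlam]; exact hxl.le, by positivity,
        by ring, ?_⟩
    ext <;> simp <;> field_simp

lemma convexHull_originAndSquare_diff {lam : ℝ} (hlam : 0 < lam) :
    convexHull ℝ (originAndSquare lam) \ originAndSquare lam =
      {p | p.1 ∈ Ioo 0 lam ∧ p.2 ∈ Icc 0 (p.1 / lam)} := by
  rw [convexHull_originAndSquare hlam]
  ext ⟨x, y⟩
  simp only [originAndSquare, mem_sdiff, mem_ofPred_eq, mem_union, mem_singleton_iff, mem_prod,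
    mem_Icc, mem_Ioo, Prod.ext_iff, Prod.fst_zero, Prod.snd_zero, le_div_iff₀ hlam]
  constructor
  · rintro ⟨⟨hy₀, hy₁, hyx, hx⟩, hnot⟩
    have hxl : x < lam := by
      by_contra! h
      exact hnot (Or.inr ⟨⟨h, hx⟩, hy₀, hy₁⟩)
    have hx₀ : 0 < x := by
      by_contra! h
      exact hnot (Or.inl ⟨by nlinarith, by nlinarith⟩)
    exact ⟨⟨hx₀, hxl⟩, hy₀, by linarith⟩
  · rintro ⟨⟨hx₀, hxl⟩, hy₀, hyx⟩
    refine ⟨⟨hy₀, by nlinarith, by linarith, by linarith⟩, ?_⟩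
    rintro (⟨rfl, -⟩ | ⟨⟨hlx, -⟩, -⟩) <;> linarith

lemma measure_region_between_cc_eq_regionBetween {α : Type*} [MeasurableSpace α]
    (μ : Measure α) [SFinite μ] {f g : α → ℝ} {s : Set α} (hf : Measurable f)
    (hg : Measurable g) (hs : MeasurableSet s) :
    μ.prod volume {p : α × ℝ | p.1 ∈ s ∧ p.2 ∈ Icc (f p.1) (g p.1)} =
      μ.prod volume (regionBetween f g s) := by
  rw [Measure.prod_apply (measurableSet_region_between_cc hf hg hs),
    Measure.prod_apply (measurableSet_regionBetween hf hg hs)]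
  congr 1 with x
  by_cases hx : x ∈ s
  · simp only [preimage_ofPred_eq, hx, true_and, regionBetween]
    exact Real.volume_Icc.trans Real.volume_Ioo.symm
  · simp [regionBetween, hx]

lemma volume_triangle {lam : ℝ} (hlam : 0 < lam) :
    volume {p : ℝ × ℝ | p.1 ∈ Ioo 0 lam ∧ p.2 ∈ Icc 0 (p.1 / lam)} =
      ENNReal.ofReal (lam / 2) := by
  have hg : Continuous fun x : ℝ => x / lam := continuous_id.div_const lam
  rw [Measure.volume_eq_prod, measure_region_between_cc_eq_regionBetween (f := fun _ => 0) volume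
      measurable_const hg.measurable measurableSet_Ioo,
    volume_regionBetween_eq_integral (integrableOn_const (by simp))
      (hg.integrableOn_Icc.mono_set Ioo_subset_Icc_self) measurableSet_Ioo
      (fun x hx => div_nonneg hx.1.le hlam.le),
    ← integral_Ioc_eq_integral_Ioo, ← intervalIntegral.integral_of_le hlam.le]
  simp only [Pi.sub_apply, sub_zero, intervalIntegral.integral_div, integral_id]
  congr 1
  field_simp
  ring

lemma smul_add_smul_originAndSquare {lam a b : ℝ} (ha : 0 < a) (hb : 0 < b) (hab : a + b = 1) :
    a • originAndSquare lam + b • originAndSquare lam =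
      originAndSquare lam ∪ Icc (a * lam) (a * (1 + lam)) ×ˢ Icc 0 a ∪
        Icc (b * lam) (b * (1 + lam)) ×ˢ Icc 0 b := by
  have hsquare : Convex ℝ (Icc lam (1 + lam) ×ˢ Icc (0 : ℝ) 1) :=
    (convex_Icc _ _).prod (convex_Icc _ _)
  have hsum := hsquare.add_smul ha.le hb.le
  rw [hab, one_smul] at hsum
  simp only [originAndSquare, smul_set_union, smul_zero, singleton_zero, union_add, add_union,
    zero_add, add_zero, ← hsum]
  simp only [smul_set_prod, LinearOrderedField.smul_Icc ha, LinearOrderedField.smul_Icc hb,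
    mul_zero, mul_one]
  ac_rfl

lemma Icc_prod_Icc_diff_originAndSquare {lam p q s : ℝ} (hp : 0 < p) (hq : lam ≤ q)
    (hq' : q ≤ 1 + lam) (hs : s ≤ 1) :
    Icc p q ×ˢ Icc 0 s \ originAndSquare lam = Ico p lam ×ˢ Icc 0 s := by
  ext ⟨x, y⟩
  simp only [originAndSquare, mem_sdiff, mem_union, mem_singleton_iff, mem_prod, mem_Icc, mem_Ico,
    Prod.ext_iff, Prod.fst_zero, Prod.snd_zero]
  constructor
  · rintro ⟨⟨⟨hpx, hxq⟩, hy₀, hys⟩, hnot⟩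
    refine ⟨⟨hpx, ?_⟩, hy₀, hys⟩
    by_contra! h
    exact hnot (Or.inr ⟨⟨h, by linarith⟩, hy₀, by linarith⟩)
  · rintro ⟨⟨hpx, hxl⟩, hy₀, hys⟩
    refine ⟨⟨⟨hpx, by linarith⟩, hy₀, hys⟩, ?_⟩
    rintro (⟨rfl, -⟩ | ⟨⟨hlx, -⟩, -⟩) <;> linarith

lemma smul_add_smul_originAndSquare_diff {lam a b : ℝ} (hlam : 0 < lam) (ha : lam ≤ a)
    (hb : lam ≤ b) (hab : a + b = 1) :
    (a • originAndSquare lam + b • originAndSquare lam) \ originAndSquare lam =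
      Ico (a * lam) lam ×ˢ Icc 0 a ∪ Ico (b * lam) lam ×ˢ Icc 0 b := by
  rw [smul_add_smul_originAndSquare (hlam.trans_le ha) (hlam.trans_le hb) hab,
    union_sdiff_distrib, union_sdiff_distrib, sdiff_self, empty_union,
    Icc_prod_Icc_diff_originAndSquare (by nlinarith) (by nlinarith) (by nlinarith) (by linarith),
    Icc_prod_Icc_diff_originAndSquare (by nlinarith) (by nlinarith) (by nlinarith) (by linarith)]

lemma volume_Ico_prod_Icc_union {a a' b h h' : ℝ} (ha : a ≤ a') (ha' : a' ≤ b) (hh : 0 ≤ h)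
    (hh' : h ≤ h') :
    volume (Ico a b ×ˢ Icc 0 h ∪ Ico a' b ×ˢ Icc 0 h') =
      ENNReal.ofReal ((b - a) * h + (b - a') * (h' - h)) := by
  have hsplit : Ico a b ×ˢ Icc 0 h ∪ Ico a' b ×ˢ Icc 0 h' =
      Ico a b ×ˢ Icc 0 h ∪ Ico a' b ×ˢ Ioc h h' := by
    ext ⟨x, y⟩
    simp only [mem_union, mem_prod, mem_Ico, mem_Icc, mem_Ioc]
    constructor
    · rintro (hxy | ⟨hx, hy₀, hy⟩)
      · exact Or.inl hxy
      · rcases le_or_gt y h with hyh | hyh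
        · exact Or.inl ⟨⟨by linarith, hx.2⟩, hy₀, hyh⟩
        · exact Or.inr ⟨hx, hyh, hy⟩
    · rintro (hxy | ⟨hx, hy₀, hy⟩)
      · exact Or.inl hxy
      · exact Or.inr ⟨hx, by linarith, hy⟩
  have hdisj : Disjoint (Ico a b ×ˢ Icc 0 h) (Ico a' b ×ˢ Ioc h h') :=
    disjoint_prod.2 (Or.inr ((Iic_disjoint_Ioc le_rfl).mono_left Icc_subset_Iic_self))
  rw [hsplit, measure_union hdisj (measurableSet_Ico.prod measurableSet_Ioc),
    Measure.volume_eq_prod, Measure.prod_prod, Measure.prod_prod, Real.volume_Ico,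
    Real.volume_Icc, Real.volume_Ico, Real.volume_Ioc, ← ENNReal.ofReal_mul (by linarith),
    ← ENNReal.ofReal_mul (by linarith), ← ENNReal.ofReal_add (by nlinarith) (by nlinarith),
    sub_zero]

/-- Sharpness example: for `n ≥ 2`, `τ ∈ (0,1/2]`, `t = τ` and
`A = ({(0,0)} ∪ [λ,1+λ]×[0,1]) × [0,1]^{n-2}`, for all sufficiently small `λ > 0` one has
`|co(A) \ A| = λ/2` and `δ(A;t) = |(tA + (1-t)A) \ A| = τλ(2-3τ)`. -/
theorem stmt12 {n : ℕ} (hn : 2 ≤ n) (τ : ℝ) (hτ : τ ∈ Set.Ioc (0:ℝ) (1/2)) :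
    ∃ lam0 : ℝ, 0 < lam0 ∧ ∀ lam : ℝ, 0 < lam → lam ≤ lam0 →
      (fun (A : Set (Fin n → ℝ)) =>
        volume (convexHull ℝ A \ A) = ENNReal.ofReal (lam / 2) ∧
        volume ((τ • A + (1 - τ) • A) \ A) = ENNReal.ofReal (τ * lam * (2 - 3 * τ)))
      {y : Fin n → ℝ |
        ((y ⟨0, by omega⟩ = 0 ∧ y ⟨1, by omega⟩ = 0) ∨
          (y ⟨0, by omega⟩ ∈ Set.Icc lam (1 + lam) ∧ y ⟨1, by omega⟩ ∈ Set.Icc (0:ℝ) 1)) ∧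
        ∀ i : Fin n, 2 ≤ (i : ℕ) → y i ∈ Set.Icc (0:ℝ) 1} := by
  obtain ⟨hτ₀, hτ₂⟩ := hτ
  obtain ⟨m, rfl⟩ : ∃ m, n = m + 2 := ⟨n - 2, by omega⟩
  refine ⟨τ, hτ₀, fun lam hlam hlamτ => ?_⟩
  beta_reduce
  rw [setOf_eq_preimage_splitTwo]
  constructor
  · rw [LinearEquiv.convexHull_preimage, ← preimage_sdiff,
      convexHull_prod_diff_prod _ (convex_Icc 0 1), volume_preimage_splitTwo_prod_Icc,
      convexHull_originAndSquare_diff hlam, volume_triangle hlam]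
  · rw [← LinearEquiv.preimage_smul_add_smul, ← preimage_sdiff,
      smul_add_smul_prod_diff_prod _ (convex_Icc 0 1) hτ₀.le (by linarith) (by ring),
      volume_preimage_splitTwo_prod_Icc,
      smul_add_smul_originAndSquare_diff hlam hlamτ (by linarith) (by ring),
      volume_Ico_prod_Icc_union (by nlinarith) (by nlinarith) hτ₀.le (by linarith)]
    congr 1
    ring
end

section
/- Exponential lower bound example: let R ≥ 2 and A = [0,2]^{n−1} × [−R, 0] ∪ {(0,…,0,2)} ⊆ ℝⁿ. Then (A + A)/2 = A ∪ [0,1]ⁿ, so δ(A; 1/2) = |(A+A)/2 \ A| = 1, while |co(A) \ A| = ∫₀² (2−x)^{n−1} dx = 2ⁿ/n. -/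
open MeasureTheory Set
open scoped ENNReal Pointwise

/-! Write `A = S ∪ {p}` with `S` the slab and `p` the apex. Since `S` is convex,
`(A + A) / 2 = A ∪ (S + p) / 2`, and `(S + p) / 2 = [0,1]^{n-1} × [1 - R/2, 1]` adds to `A`
exactly the unit cube once `R ≥ 2`; the cube meets `A` only in a null set. The convex hull of
`A` is `S` together with the pyramid `{0 < x_n ≤ 2, 0 ≤ x_i ≤ 2 - x_n}` over the top face of `S`,
and slicing the pyramid at height `x` gives a cube of volume `(2 - x)^{n-1}`. -/

theorem Convex.half_smul_add_half_smul_union_singleton {E : Type*} [AddCommGroup E] [Module ℝ E]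
    {s : Set E} (hs : Convex ℝ s) (p : E) :
    (1/2 : ℝ) • (s ∪ {p}) + (1/2 : ℝ) • (s ∪ {p}) =
      s ∪ {p} ∪ ((1/2 : ℝ) • s + {(1/2 : ℝ) • p}) := by
  rw [smul_set_union, smul_set_singleton, union_add, add_union, add_union,
    ← hs.add_smul (by norm_num) (by norm_num), singleton_add_singleton, ← add_smul,
    add_comm {(1/2 : ℝ) • p}, add_halves, one_smul, one_smul]
  ext
  simp only [mem_union]
  tauto

namespace SlabApex

variable {ι : Type*} {R : ℝ} {k : ι}

def slab (R : ℝ) (k : ι) : Set (ι → ℝ) :=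
  {y | (∀ i : ι, i ≠ k → y i ∈ Icc (0:ℝ) 2) ∧ y k ∈ Icc (-R) 0}

def apex [DecidableEq ι] (k : ι) : ι → ℝ := fun i => if i = k then 2 else 0

def pyramid (k : ι) (a : ℝ) : Set (ι → ℝ) :=
  {y | y k ∈ Ioc 0 a ∧ ∀ i, i ≠ k → y i ∈ Icc 0 (a - y k)}

theorem convex_slab : Convex ℝ (slab R k) := fun _ hx _ hy _ _ ha hb hab =>
  ⟨fun i hi => convex_Icc 0 2 (hx.1 i hi) (hy.1 i hi) ha hb hab,
    convex_Icc (-R) 0 hx.2 hy.2 ha hb hab⟩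

theorem half_smul_add_half_smul_apply (y z : ι → ℝ) (i : ι) :
    ((1/2 : ℝ) • y + (1/2 : ℝ) • z) i = (y i + z i) / 2 := by
  simp only [Pi.add_apply, Pi.smul_apply, smul_eq_mul]; ring

theorem slab_union_pyramid_eq (hR : 0 ≤ R) : slab R k ∪ pyramid k 2 =
    {y | y k ∈ Icc (-R) 2 ∧ ∀ i, i ≠ k → y i ∈ Icc 0 2 ∧ y i + y k ≤ 2} := by
  ext y
  constructor
  · rintro (⟨hy, hyk⟩ | ⟨hyk, hy⟩)
    · exact ⟨⟨hyk.1, by linarith [hyk.2]⟩,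
        fun i hi => ⟨hy i hi, by linarith [(hy i hi).2, hyk.2]⟩⟩
    · exact ⟨⟨by linarith [hyk.1], hyk.2⟩,
        fun i hi => ⟨⟨(hy i hi).1, by linarith [(hy i hi).2, hyk.1]⟩,
          by linarith [(hy i hi).2]⟩⟩
  · rintro ⟨hyk, hy⟩
    rcases le_or_gt (y k) 0 with h | h
    · exact Or.inl ⟨fun i hi => (hy i hi).1, hyk.1, h⟩
    · exact Or.inr ⟨⟨h, hyk.2⟩, fun i hi => ⟨(hy i hi).1.1, by linarith [(hy i hi).2]⟩⟩

theorem convex_slab_union_pyramid (hR : 0 ≤ R) : Convex ℝ (slab R k ∪ pyramid k 2) := by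
  rw [slab_union_pyramid_eq hR]
  intro x hx y hy a b ha hb hab
  refine ⟨convex_Icc (-R) 2 hx.1 hy.1 ha hb hab,
    fun i hi => ⟨convex_Icc 0 2 (hx.2 i hi).1 (hy.2 i hi).1 ha hb hab, ?_⟩⟩
  have := convex_Iic (2 : ℝ) (hx.2 i hi).2 (hy.2 i hi).2 ha hb hab
  simp only [Pi.add_apply, Pi.smul_apply, smul_eq_mul, mem_Iic] at this ⊢
  linarith

theorem disjoint_slab_pyramid (a : ℝ) : Disjoint (slab R k) (pyramid k a) :=
  disjoint_left.2 fun _ hs hp => (hs.2.2.trans_lt hp.1.1).false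

theorem volume_cube [Fintype ι] : volume {y : ι → ℝ | ∀ i, y i ∈ Icc 0 1} = 1 := by
  have : {y : ι → ℝ | ∀ i, y i ∈ Icc 0 1} = univ.pi fun _ => Icc 0 1 := by
    ext; simp only [mem_ofPred_eq, mem_pi, mem_univ, true_implies]
  rw [this, volume_pi_pi]
  simp

theorem volume_pyramid [DecidableEq ι] [Fintype ι] {a : ℝ} (ha : 0 ≤ a) :
    volume (pyramid k a) = ENNReal.ofReal (a ^ Fintype.card ι / Fintype.card ι) := by
  let e : (ι → ℝ) ≃ᵐ ℝ × ({i // i ≠ k} → ℝ) :=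
    (MeasurableEquiv.piEquivPiSubtypeProd (fun _ => ℝ) (· = k)).trans
      ((MeasurableEquiv.piUnique _).prodCongr (MeasurableEquiv.refl _))
  have he : MeasurePreserving e volume (volume.prod volume) := by
    refine MeasurePreserving.comp (g := Prod.map (MeasurableEquiv.piUnique _) id)
      (MeasurePreserving.prod ?_ (.id _)) (volume_preserving_piEquivPiSubtypeProd _ (· = k))
    -- the two sides carry different (but equal) `Fintype` instances on `{i // i = k}`
    convert measurePreserving_piUnique fun _ : {i // i = k} => (volume : Measure ℝ) using 1 <;>
      (try simp only [volume_pi]) <;> congr!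
  let T : Set (ℝ × ({i // i ≠ k} → ℝ)) :=
    {q | q.1 ∈ Ioc 0 a ∧ ∀ j, q.2 j ∈ Icc 0 (a - q.1)}
  have hT : MeasurableSet T := by
    simp only [T, ofPred_and, ofPred_forall, mem_Icc]
    measurability
  have hpre : pyramid k a = e ⁻¹' T := by
    ext y
    exact and_congr Iff.rfl ⟨fun h j => h j j.2, fun h i hi => h ⟨i, hi⟩⟩
  have hslice (x : ℝ) : volume (Prod.mk x ⁻¹' T) =
      (Ioc 0 a).indicator (fun x => ENNReal.ofReal ((a - x) ^ (Fintype.card ι - 1))) x := by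
    by_cases hx : x ∈ Ioc 0 a
    · have : Prod.mk x ⁻¹' T = univ.pi fun _ => Icc 0 (a - x) := by
        ext w
        simp only [T, mem_preimage, mem_ofPred_eq, mem_pi, mem_univ, true_implies,
          and_iff_right hx]
      rw [this, indicator_of_mem hx, volume_pi_pi]
      simp [Real.volume_Icc, ENNReal.ofReal_pow (sub_nonneg.2 hx.2), Fintype.card_subtype_compl]
    · have : Prod.mk x ⁻¹' T = ∅ := by
        ext w; simp only [T, mem_preimage, mem_ofPred_eq, hx, false_and, mem_empty_iff_false]
      simp [this, hx]
  obtain ⟨m, hm⟩ : ∃ m, Fintype.card ι = m + 1 :=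
    Nat.exists_eq_succ_of_ne_zero (Fintype.card_pos_iff.2 ⟨k⟩).ne'
  rw [hpre, he.measure_preimage hT.nullMeasurableSet, Measure.prod_apply hT]
  simp_rw [hslice]
  rw [lintegral_indicator measurableSet_Ioc, ← ofReal_integral_eq_lintegral_ofReal,
    ← intervalIntegral.integral_of_le ha, intervalIntegral.integral_comp_sub_left (· ^ _) a]
  · simp [integral_pow, hm]
  · exact (continuous_const.sub continuous_id).pow _ |>.integrableOn_Ioc
  · filter_upwards [self_mem_ae_restrict measurableSet_Ioc] with x hx
    exact pow_nonneg (sub_nonneg.2 hx.2) _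

section apex

variable [DecidableEq ι]

@[simp] theorem apex_self : apex k k = 2 := if_pos rfl

@[simp] theorem apex_of_ne {i : ι} (hi : i ≠ k) : apex k i = 0 := if_neg hi

theorem half_smul_slab_add_apex_subset :
    (1/2 : ℝ) • slab R k + {(1/2 : ℝ) • apex k} ⊆ slab R k ∪ {y | ∀ i, y i ∈ Icc 0 1} := by
  rintro _ ⟨_, ⟨y, ⟨hy, hyk⟩, rfl⟩, _, rfl, rfl⟩
  beta_reduce
  have hz := half_smul_add_half_smul_apply y (apex k)
  rcases le_or_gt 0 ((y k + 2) / 2) with hk | hk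
  · refine Or.inr fun i => ?_
    rcases eq_or_ne i k with rfl | hi
    · rw [hz, apex_self]
      constructor <;> linarith [hyk.2]
    · rw [hz, apex_of_ne hi]
      constructor <;> linarith [(hy i hi).1, (hy i hi).2]
  · refine Or.inl ⟨fun i hi => ?_, ?_⟩
    · rw [hz, apex_of_ne hi]
      constructor <;> linarith [(hy i hi).1, (hy i hi).2]
    · rw [hz, apex_self]
      constructor <;> linarith [hyk.1, hyk.2]

theorem cube_subset_half_smul_slab_add_apex (hR : 2 ≤ R) :
    {y | ∀ i, y i ∈ Icc 0 1} ⊆ (1/2 : ℝ) • slab R k + {(1/2 : ℝ) • apex k} := by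
  intro z hz
  refine ⟨(1/2 : ℝ) • ((2 : ℝ) • z - apex k), smul_mem_smul_set ⟨fun i hi => ?_, ?_⟩, _, rfl,
    ?_⟩
  · simp only [Pi.sub_apply, Pi.smul_apply, smul_eq_mul, apex_of_ne hi]
    constructor <;> linarith [(hz i).1, (hz i).2]
  · simp only [Pi.sub_apply, Pi.smul_apply, smul_eq_mul, apex_self]
    constructor <;> linarith [(hz k).1, (hz k).2]
  · beta_reduce
    rw [← smul_add, sub_add_cancel, smul_smul]
    norm_num

theorem half_smul_add_half_smul_slab_union_apex (hR : 2 ≤ R) :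
    (1/2 : ℝ) • (slab R k ∪ {apex k}) + (1/2 : ℝ) • (slab R k ∪ {apex k}) =
      slab R k ∪ {apex k} ∪ {y | ∀ i, y i ∈ Icc 0 1} := by
  rw [convex_slab.half_smul_add_half_smul_union_singleton]
  exact subset_antisymm
    (union_subset subset_union_left
      (half_smul_slab_add_apex_subset.trans (union_subset_union_left _ subset_union_left)))
    (union_subset_union_right _ (cube_subset_half_smul_slab_add_apex hR))

theorem apex_mem_pyramid : apex k ∈ pyramid k 2 :=
  ⟨by simp, fun i hi => by simp [hi]⟩

theorem pyramid_subset_convexHull (hR : 0 ≤ R) :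
    pyramid k 2 ⊆ convexHull ℝ (slab R k ∪ {apex k}) := by
  rintro y ⟨hyk, hy⟩
  rcases hyk.2.eq_or_lt with htop | hlt
  · have hapex : y = apex k := funext fun i => by
      rcases eq_or_ne i k with rfl | hi
      · simp [htop]
      · have := hy i hi
        rw [htop, sub_self] at this
        simp [hi, le_antisymm this.2 this.1]
    exact subset_convexHull ℝ _ (Or.inr hapex)
  -- `y` lies on the segment from a point `b` of the base `y k = 0` of the pyramid to the apex
  set t := y k / 2 with ht_def
  have ht : 0 < 1 - t := by linarith
  let b : ι → ℝ := fun i => if i = k then 0 else y i / (1 - t)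
  have hb : b ∈ slab R k := by
    refine ⟨fun i hi => ?_, by simp [b, hR]⟩
    simp only [b, if_neg hi]
    exact ⟨div_nonneg (hy i hi).1 ht.le, (div_le_iff₀ ht).2 (by linarith [(hy i hi).2])⟩
  have hy_eq : (1 - t) • b + t • apex k = y := funext fun i => by
    rcases eq_or_ne i k with rfl | hi
    · simp [b, t]
    · simp [b, hi, mul_div_cancel₀ _ ht.ne']
  exact segment_subset_convexHull (mem_union_left _ hb) (mem_union_right _ (mem_singleton _))
    ⟨1 - t, t, ht.le, div_nonneg hyk.1.le zero_le_two, sub_add_cancel 1 t, hy_eq⟩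

theorem convexHull_slab_union_apex (hR : 0 ≤ R) :
    convexHull ℝ (slab R k ∪ {apex k}) = slab R k ∪ pyramid k 2 :=
  subset_antisymm
    (convexHull_min (union_subset_union_right _ (singleton_subset_iff.2 apex_mem_pyramid))
      (convex_slab_union_pyramid hR))
    (union_subset (subset_union_left.trans (subset_convexHull ℝ _))
      (pyramid_subset_convexHull hR))

theorem convexHull_slab_union_apex_sdiff (hR : 0 ≤ R) :
    convexHull ℝ (slab R k ∪ {apex k}) \ (slab R k ∪ {apex k}) = pyramid k 2 \ {apex k} := by
  rw [convexHull_slab_union_apex hR, ← sdiff_sdiff, union_sdiff_left,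
    (disjoint_slab_pyramid 2).symm.sdiff_eq_left]

theorem volume_cube_inter_slab_union_apex [Fintype ι] :
    volume ({y : ι → ℝ | ∀ i, y i ∈ Icc 0 1} ∩ (slab R k ∪ {apex k})) = 0 := by
  have : Nonempty ι := ⟨k⟩
  refine measure_mono_null (t := {y | y k = 0} ∪ {apex k}) ?_
    (measure_union_null (Measure.pi_hyperplane (fun _ : ι => (volume : Measure ℝ)) k 0)
      (measure_singleton _))
  rintro y ⟨hy, hyA | hyA⟩
  · exact Or.inl (le_antisymm hyA.2.2 (hy k).1)
  · exact Or.inr hyA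

theorem volume_union_cube_sdiff [Fintype ι] :
    volume ((slab R k ∪ {apex k} ∪ {y | ∀ i, y i ∈ Icc 0 1}) \ (slab R k ∪ {apex k})) = 1 := by
  rw [union_sdiff_left, measure_sdiff_null' volume_cube_inter_slab_union_apex, volume_cube]

theorem volume_convexHull_slab_union_apex_sdiff [Fintype ι] (hR : 0 ≤ R) :
    volume (convexHull ℝ (slab R k ∪ {apex k}) \ (slab R k ∪ {apex k})) =
      ENNReal.ofReal (2 ^ Fintype.card ι / Fintype.card ι) := by
  have : Nonempty ι := ⟨k⟩
  rw [convexHull_slab_union_apex_sdiff hR, measure_sdiff_null (measure_singleton _),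
    volume_pyramid zero_le_two]

end apex

end SlabApex

theorem stmt13_general {n : ℕ} (R : ℝ) (hR : 2 ≤ R)
    (last : Fin n)
    (A : Set (Fin n → ℝ))
    (hA : A = {y : Fin n → ℝ |
        (∀ i : Fin n, i ≠ last → y i ∈ Set.Icc (0:ℝ) 2) ∧ y last ∈ Set.Icc (-R) 0}
      ∪ {fun i => if i = last then 2 else 0}) :
    ((1/2 : ℝ) • A + (1/2 : ℝ) • A) = A ∪ {y : Fin n → ℝ | ∀ i, y i ∈ Set.Icc (0:ℝ) 1} ∧
    volume (((1/2 : ℝ) • A + (1/2 : ℝ) • A) \ A) = 1 ∧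
    volume (convexHull ℝ A \ A) = ENNReal.ofReal (2 ^ n / n) := by
  obtain rfl : A = SlabApex.slab R last ∪ {SlabApex.apex last} := hA
  have hmid := SlabApex.half_smul_add_half_smul_slab_union_apex (k := last) hR
  refine ⟨hmid, ?_, ?_⟩
  · rw [hmid, SlabApex.volume_union_cube_sdiff]
  · rw [SlabApex.volume_convexHull_slab_union_apex_sdiff (by linarith), Fintype.card_fin]

/-- Exponential lower bound example: for `R ≥ 2` and
`A = [0,2]^{n-1} × [-R,0] ∪ {(0,…,0,2)} ⊆ ℝⁿ`, one has `(A+A)/2 = A ∪ [0,1]ⁿ`,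
hence `δ(A;1/2) = |(A+A)/2 \ A| = 1`, while `|co(A) \ A| = 2ⁿ/n`. -/
theorem stmt13 {n : ℕ} (hn : 1 ≤ n) (R : ℝ) (hR : 2 ≤ R)
    (last : Fin n) (hlast : (last : ℕ) = n - 1)
    (A : Set (Fin n → ℝ))
    (hA : A = {y : Fin n → ℝ |
        (∀ i : Fin n, i ≠ last → y i ∈ Set.Icc (0:ℝ) 2) ∧ y last ∈ Set.Icc (-R) 0}
      ∪ {fun i => if i = last then 2 else 0}) :
    ((1/2 : ℝ) • A + (1/2 : ℝ) • A) = A ∪ {y : Fin n → ℝ | ∀ i, y i ∈ Set.Icc (0:ℝ) 1} ∧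
    volume (((1/2 : ℝ) • A + (1/2 : ℝ) • A) \ A) = 1 ∧
    volume (convexHull ℝ A \ A) = ENNReal.ofReal (2 ^ n / n) :=
  stmt13_general R hR last A hA
end
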